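/- arXiv:2602.24285 — 16 statements merged into one kernel-verified Lean document; each statement's English description precedes it below -/
import Mathlib

section
/- Let X be a linear order such that X + X embeds in X. Then X is indecomposable: whenever X is partitioned into an initial segment I and the complementary final segment J = X \ I, either X embeds in I or X embeds in J. -/
universe u

/-- `Embeds X Y` means there is a strictly order-preserving map from `X` to `Y`. -/
def Embeds (X : Type u) (Y : Type v) [LinearOrder X] [LinearOrder Y] : Prop :=
  ∃ f : X → Y, StrictMono f

theorem stmt_1 (X : Type u) [LinearOrder X]
    (h : Embeds (X ⊕ₗ X) X) :
    ∀ I : Set X, IsLowerSet I → Embeds X ↥I ∨ Embeds X ↥(Iᶜ) := by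
  obtain ⟨f, hf⟩ := h
  intro I hI
  by_cases hc : ∀ x : X, f (toLex (Sum.inl x)) ∈ I
  · left
    refine ⟨fun x => ⟨f (toLex (Sum.inl x)), hc x⟩, fun a b hab => ?_⟩
    exact Subtype.mk_lt_mk.mpr (hf (Sum.Lex.inl_lt_inl_iff.mpr hab))
  · right
    push_neg at hc
    obtain ⟨x₀, hx₀⟩ := hc
    refine ⟨fun x => ⟨f (toLex (Sum.inr x)), fun hmem => ?_⟩, fun a b hab => ?_⟩
    · exact hx₀ (hI (le_of_lt (hf (Sum.Lex.inl_lt_inr x₀ x))) hmem)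
    · exact Subtype.mk_lt_mk.mpr (hf (Sum.Lex.inr_lt_inr_iff.mpr hab))
end

section
/- Let X be a linear order that is equimorphic to X + X. Then X is sum closed: whenever A and B are linear orders with A ≼ X, X ⋠ A, B ≼ X, and X ⋠ B, then A + B ≼ X and X ⋠ A + B. -/
universe u v

theorem stmt_2 (X : Type u) [LinearOrder X]
    (h₁ : Embeds X (X ⊕ₗ X)) (h₂ : Embeds (X ⊕ₗ X) X) :
    ∀ (A B : Type v) [LinearOrder A] [LinearOrder B],
      Embeds A X → ¬ Embeds X A → Embeds B X → ¬ Embeds X B →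
        Embeds (A ⊕ₗ B) X ∧ ¬ Embeds X (A ⊕ₗ B) := by
  intro A B _ _ hAX hXA hBX hXB
  obtain ⟨fa, hfa⟩ := hAX
  obtain ⟨fb, hfb⟩ := hBX
  obtain ⟨g, hg⟩ := h₂
  constructor
  · -- A ⊕ₗ B ≼ X
    refine ⟨fun z => g (toLex (Sum.map fa fb (ofLex z))), ?_⟩
    intro z w hzw
    apply hg
    cases hzw with
    | inl h => exact Sum.Lex.inl (hfa h)
    | inr h => exact Sum.Lex.inr (hfb h)
    | sep => exact Sum.Lex.sep _ _
  · rintro ⟨e0, he0⟩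
    set e : X ⊕ₗ X → A ⊕ₗ B := fun z => e0 (g z) with he
    have hem : StrictMono e := fun z w h => he0 (hg h)
    by_cases hc : ∃ x b, e (toLex (Sum.inl x)) = toLex (Sum.inr b)
    · obtain ⟨x₀, b₀, hx₀⟩ := hc
      -- every e (inr y) is inr
      have key : ∀ y : X, ∃ b, e (toLex (Sum.inr y)) = toLex (Sum.inr b) := by
        intro y
        have hlt : e (toLex (Sum.inl x₀)) < e (toLex (Sum.inr y)) :=
          hem (Sum.Lex.sep _ _)
        rw [hx₀] at hlt
        rcases h' : ofLex (e (toLex (Sum.inr y))) with a | b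
        · exfalso
          have : e (toLex (Sum.inr y)) = toLex (Sum.inl a) := by
            rw [← h']; rfl
          rw [this] at hlt
          exact absurd hlt (by simp [Sum.lex_inr_inl])
        · exact ⟨b, by rw [← h']; rfl⟩
      choose fB hfB using key
      apply hXB
      refine ⟨fB, ?_⟩
      intro y y' hyy
      have := hem (show (toLex (Sum.inr y) : X ⊕ₗ X) < toLex (Sum.inr y') from Sum.Lex.inr hyy)
      rw [hfB, hfB] at this
      exact Sum.lex_inr_inr.mp this
    · push_neg at hc
      have key : ∀ x : X, ∃ a, e (toLex (Sum.inl x)) = toLex (Sum.inl a) := by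
        intro x
        rcases h' : ofLex (e (toLex (Sum.inl x))) with a | b
        · exact ⟨a, by rw [← h']; rfl⟩
        · exact absurd (show e (toLex (Sum.inl x)) = toLex (Sum.inr b) by rw [← h']; rfl)
            (hc x b)
      choose fA hfA using key
      apply hXA
      refine ⟨fA, ?_⟩
      intro x x' hxx
      have := hem (show (toLex (Sum.inl x) : X ⊕ₗ X) < toLex (Sum.inl x') from Sum.Lex.inl hxx)
      rw [hfA, hfA] at this
      exact Sum.lex_inl_inl.mp this
end

section
/- Let ρ, τ, φ, ψ be linear orders with ρ and φ not both empty. If the product ρτ embeds in the product φψ, then either (1 + ρ embeds in φ and ρ + 1 embeds in φ) or τ embeds in ψ. -/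
universe u

section Helpers

variable {X Y Z : Type*} [LinearOrder X] [LinearOrder Y] [LinearOrder Z]

lemma strictMono_of_subsingleton [Subsingleton X] (g : X → Z) : StrictMono g := by
  intro a b hab
  exact absurd (Subsingleton.elim a b ▸ hab) (lt_irrefl b)

lemma sumLexElim_strictMono (g₁ : X → Z) (g₂ : Y → Z) (h₁ : StrictMono g₁)
    (h₂ : StrictMono g₂) (hsep : ∀ x y, g₁ x < g₂ y) :
    StrictMono (fun a : X ⊕ₗ Y => Sum.elim g₁ g₂ (ofLex a)) := by
  intro a b hab
  rcases Sum.Lex.lt_def.mp hab with ⟨h⟩ | ⟨h⟩ | ⟨x, y⟩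
  · exact h₁ h
  · exact h₂ h
  · exact hsep _ _

/-- The key lemma: if `A` is nonempty, `f : B ×ₗ A → D ×ₗ C` is strictly monotone and
`1 + A` does not embed in `C`, then `B` embeds in `D`. -/
theorem key_embeds {A B C D : Type*} [LinearOrder A] [LinearOrder B] [LinearOrder C]
    [LinearOrder D] (a₀ : A) (f : B ×ₗ A → D ×ₗ C) (hf : StrictMono f)
    (h1 : ¬ Embeds (PUnit ⊕ₗ A) C) : Embeds B D := by
  classical
  set f₁ : B → A → D := fun t r => (ofLex (f (toLex (t, r)))).1 with hdf₁
  set f₂ : B → A → C := fun t r => (ofLex (f (toLex (t, r)))).2 with hdf₂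
  have hlex : ∀ {t t' : B} {r r' : A}, toLex (t, r) < toLex (t', r') →
      f₁ t r < f₁ t' r' ∨ (f₁ t r = f₁ t' r' ∧ f₂ t r < f₂ t' r') := by
    intro t t' r r' h
    have h2 := hf h
    rcases (Prod.Lex.toLex_lt_toLex (x := ofLex (f (toLex (t, r)))) (y := ofLex (f (toLex (t', r'))))).mp h2
      with h3 | ⟨h3, h4⟩
    · exact Or.inl h3
    · exact Or.inr ⟨h3, h4⟩
  have hle : ∀ {t t' : B} (r r' : A), t < t' → f₁ t r ≤ f₁ t' r' := by
    intro t t' r r' h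
    rcases hlex (r := r) (r' := r') (Prod.Lex.toLex_lt_toLex.mpr (Or.inl h)) with h3 | ⟨h3, _⟩
    · exact le_of_lt h3
    · exact le_of_eq h3
  have hsnd : ∀ {t t' : B} {r r' : A}, toLex (t, r) < toLex (t', r') →
      f₁ t r = f₁ t' r' → f₂ t r < f₂ t' r' := by
    intro t t' r r' h heq
    rcases hlex h with h3 | ⟨_, h4⟩
    · exact absurd h3 (heq ▸ lt_irrefl _)
    · exact h4
  -- L1 : a whole copy trapped in one fiber with a point below it gives `1 + A ≼ C`.
  have L1 : ∀ t₁ t₂ : B, t₁ < t₂ → ∀ a : A, (∀ r, f₁ t₂ r = f₁ t₁ a) → False := by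
    intro t₁ t₂ ht a hall
    apply h1
    refine ⟨fun x => Sum.elim (fun _ => f₂ t₁ a) (fun r => f₂ t₂ r) (ofLex x),
      sumLexElim_strictMono _ _ (strictMono_of_subsingleton _) ?_ ?_⟩
    · intro r r' hrr'
      exact hsnd (Prod.Lex.toLex_lt_toLex.mpr (Or.inr ⟨rfl, hrr'⟩))
        ((hall r).trans (hall r').symm)
    · intro _ r
      exact hsnd (Prod.Lex.toLex_lt_toLex.mpr (Or.inl ht)) (hall r).symm
  -- L2 : two copies sharing a fiber have nothing strictly between them.
  have L2 : ∀ t₁ u t₂ : B, t₁ < u → u < t₂ → ∀ a b, f₁ t₁ a = f₁ t₂ b → False := by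
    intro t₁ u t₂ hu1 hu2 a b hab
    apply L1 t₁ u hu1 a
    intro r
    refine le_antisymm ?_ (hle a r hu1)
    rw [hab]
    exact hle r b hu2
  -- L3 : if the copy at `t` shares a fiber with a copy below, it must also go higher.
  have L3 : ∀ t₀ t : B, t₀ < t → ∀ a b, f₁ t₀ a = f₁ t b → ∃ r, f₁ t b < f₁ t r := by
    intro t₀ t ht a b hab
    by_contra hc
    push_neg at hc
    apply L1 t₀ t ht a
    intro r
    refine le_antisymm ?_ ?_
    · rw [hab]; exact hc r
    · exact hle a r ht
  set Shr : B → Prop := fun t => ∃ a t' b, t < t' ∧ f₁ t a = f₁ t' b with hdShr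
  set Big : B → Prop := fun t => ∃ r t₀ a b, t₀ < t ∧ f₁ t₀ a = f₁ t b ∧ f₁ t b < f₁ t r
    with hdBig
  set g : B → D := fun t =>
    if h : Shr t then f₁ t h.choose
    else if h2 : Big t then f₁ t h2.choose
    else f₁ t a₀ with hdg
  have gval : ∀ t, ∃ a, g t = f₁ t a := by
    intro t
    rw [hdg]
    dsimp only
    split_ifs with h h2
    · exact ⟨_, rfl⟩
    · exact ⟨_, rfl⟩
    · exact ⟨_, rfl⟩
  have gShr : ∀ t, Shr t → ∃ t' b, t < t' ∧ g t = f₁ t' b := by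
    intro t h
    obtain ⟨t', b, ht, heq⟩ := h.choose_spec
    refine ⟨t', b, ht, ?_⟩
    rw [hdg]
    dsimp only
    rw [dif_pos h]
    exact heq
  have gBig : ∀ t, ¬ Shr t → Big t → ∃ b, f₁ t b < g t := by
    intro t h h2
    obtain ⟨t₀, a, b, ht, he, hlt⟩ := h2.choose_spec
    refine ⟨b, ?_⟩
    rw [hdg]
    dsimp only
    rw [dif_neg h, dif_pos h2]
    exact hlt
  refine ⟨g, ?_⟩
  intro t t' htt'
  obtain ⟨a, ha⟩ := gval t
  obtain ⟨b, hb⟩ := gval t'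
  have hle' : g t ≤ g t' := by
    rw [ha, hb]
    exact hle a b htt'
  rcases lt_or_eq_of_le hle' with hlt | heq
  · exact hlt
  exfalso
  have hab : f₁ t a = f₁ t' b := by rw [← ha, ← hb]; exact heq
  have hshr : Shr t := ⟨a, t', b, htt', hab⟩
  obtain ⟨t₂, c, ht₂, hgc⟩ := gShr t hshr
  by_cases hshr' : Shr t'
  · obtain ⟨t₃, d, ht₃, hgd⟩ := gShr t' hshr'
    exact L2 t t' t₃ htt' ht₃ a d (by rw [← ha, heq, hgd])
  · have hbig : Big t' := by
      obtain ⟨r, hr⟩ := L3 t t' htt' a b hab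
      exact ⟨r, t, a, b, htt', hab, hr⟩
    obtain ⟨b', hb'⟩ := gBig t' hshr' hbig
    have h1' : f₁ t a ≤ f₁ t' b' := hle a b' htt'
    have h2' : f₁ t' b' < f₁ t a := by
      rw [← ha, heq]
      exact hb'
    exact absurd h1' (not_le_of_gt h2')

/-- Dualize a strictly monotone map between lexicographic products. -/
lemma dual_lex_strictMono {A B C D : Type*} [LinearOrder A] [LinearOrder B] [LinearOrder C]
    [LinearOrder D] (f : B ×ₗ A → D ×ₗ C) (hf : StrictMono f) :
    StrictMono (fun x : Bᵒᵈ ×ₗ Aᵒᵈ =>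
      (toLex (OrderDual.toDual
          ((ofLex (f (toLex (OrderDual.ofDual (ofLex x).1, OrderDual.ofDual (ofLex x).2)))).1),
        OrderDual.toDual
          ((ofLex (f (toLex (OrderDual.ofDual (ofLex x).1, OrderDual.ofDual (ofLex x).2)))).2)) :
        Dᵒᵈ ×ₗ Cᵒᵈ)) := by
  intro x y hxy
  have h1 : toLex ((OrderDual.ofDual (ofLex y).1 : B), (OrderDual.ofDual (ofLex y).2 : A)) <
      toLex ((OrderDual.ofDual (ofLex x).1 : B), (OrderDual.ofDual (ofLex x).2 : A)) := by
    rcases (Prod.Lex.toLex_lt_toLex (x := ofLex x) (y := ofLex y)).mp hxy with h | ⟨h, h2⟩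
    · exact Prod.Lex.toLex_lt_toLex.mpr (Or.inl h)
    · exact Prod.Lex.toLex_lt_toLex.mpr (Or.inr ⟨congrArg OrderDual.ofDual h.symm, h2⟩)
  have h2 := hf h1
  rcases Prod.Lex.lt_iff.mp h2 with h3 | ⟨h3, h4⟩
  · exact Prod.Lex.toLex_lt_toLex.mpr (Or.inl h3)
  · exact Prod.Lex.toLex_lt_toLex.mpr (Or.inr ⟨congrArg OrderDual.toDual h3.symm, h4⟩)

/-- Transfer an embedding of `1 + Aᵒᵈ` into `Cᵒᵈ` to an embedding of `A + 1` into `C`. -/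
lemma punit_not_lt {u v : PUnit.{w + 1}} : ¬ u < v := by
  cases u; cases v; exact lt_irrefl _

lemma dual_sum_transfer {A C : Type*} [LinearOrder A] [LinearOrder C]
    (h : Embeds (PUnit.{w + 1} ⊕ₗ Aᵒᵈ) Cᵒᵈ) : Embeds (A ⊕ₗ PUnit.{w + 1}) C := by
  obtain ⟨e, he⟩ := h
  refine ⟨fun x => Sum.elim
    (fun a => OrderDual.ofDual (e (toLex (Sum.inr (OrderDual.toDual a)))))
    (fun u => OrderDual.ofDual (e (toLex (Sum.inl u)))) (ofLex x), ?_⟩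
  intro x y hxy
  rcases Sum.Lex.lt_def.mp hxy with ⟨h'⟩ | ⟨h'⟩ | ⟨a, u⟩
  · exact he (Sum.Lex.inr_lt_inr_iff.mpr h')
  · exact absurd h' punit_not_lt
  · exact he (Sum.Lex.inl_lt_inr _ _)

lemma dual_embeds {B D : Type*} [LinearOrder B] [LinearOrder D]
    (h : Embeds Bᵒᵈ Dᵒᵈ) : Embeds B D := by
  obtain ⟨e, he⟩ := h
  exact ⟨fun b => OrderDual.ofDual (e (OrderDual.toDual b)), fun a b hab => he hab⟩

end Helpers

/- The product `ρτ` (replace each point of `τ` by a copy of `ρ`, anti-lexicographic order)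
is represented as `τ ×ₗ ρ` (lexicographic on the `τ`-coordinate first). -/
theorem stmt_3 (ρ τ φ ψ : Type u)
    [LinearOrder ρ] [LinearOrder τ] [LinearOrder φ] [LinearOrder ψ]
    (hne : Nonempty ρ ∨ Nonempty φ)
    (h : Embeds (τ ×ₗ ρ) (ψ ×ₗ φ)) :
    (Embeds (PUnit ⊕ₗ ρ) φ ∧ Embeds (ρ ⊕ₗ PUnit) φ) ∨ Embeds τ ψ := by
  classical
  obtain ⟨f, hf⟩ := h
  by_cases hρ : Nonempty ρ
  · obtain ⟨a₀⟩ := hρ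
    by_cases hL : Embeds (PUnit ⊕ₗ ρ) φ
    · by_cases hR : Embeds (ρ ⊕ₗ PUnit) φ
      · exact Or.inl ⟨hL, hR⟩
      · right
        have h1' := fun hE => hR (dual_sum_transfer hE)
        exact dual_embeds (key_embeds (OrderDual.toDual a₀) _ (dual_lex_strictMono f hf) h1')
    · exact Or.inr (key_embeds a₀ f hf hL)
  · have hφ : Nonempty φ := hne.resolve_left hρ
    have he : IsEmpty ρ := not_nonempty_iff.mp hρ
    obtain ⟨c⟩ := hφ
    left
    constructor
    · exact ⟨fun x => Sum.elim (fun _ => c) (fun r => isEmptyElim r) (ofLex x),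
        sumLexElim_strictMono _ _ (strictMono_of_subsingleton _)
          (fun r => isEmptyElim r) (fun x y => isEmptyElim y)⟩
    · exact ⟨fun x => Sum.elim (fun r => isEmptyElim r) (fun _ => c) (ofLex x),
        sumLexElim_strictMono _ _ (fun r => isEmptyElim r)
          (strictMono_of_subsingleton _) (fun x y => isEmptyElim x)⟩
end

section
/- Let ρ, τ, φ, ψ be linear orders. If the product ρτ embeds in the product φψ, then either ρ embeds in φ or τ embeds in ψ. -/
universe u

/- The product `ρτ` (replace each point of `τ` by a copy of `ρ`, anti-lexicographic order)
is represented as `τ ×ₗ ρ` (lexicographic on the `τ`-coordinate first). -/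
theorem stmt_4 (ρ τ φ ψ : Type u)
    [LinearOrder ρ] [LinearOrder τ] [LinearOrder φ] [LinearOrder ψ]
    (h : Embeds (τ ×ₗ ρ) (ψ ×ₗ φ)) :
    Embeds ρ φ ∨ Embeds τ ψ := by
  obtain ⟨f, hf⟩ := h
  -- abbreviations for the two coordinates of `f`
  set F : τ → ρ → ψ := fun t r => (ofLex (f (toLex (t, r)))).1 with hF
  set G : τ → ρ → φ := fun t r => (ofLex (f (toLex (t, r)))).2 with hG
  have hlex : ∀ (t t' : τ) (r r' : ρ), toLex (t, r) < toLex (t', r') →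
      F t r < F t' r' ∨ F t r = F t' r' ∧ G t r < G t' r' := by
    intro t t' r r' hlt
    have := hf hlt
    rw [show f (toLex (t, r)) = toLex (ofLex (f (toLex (t, r)))) from rfl,
      show f (toLex (t', r')) = toLex (ofLex (f (toLex (t', r')))) from rfl,
      Prod.Lex.lt_iff] at this
    exact this
  have hle : ∀ (t t' : τ) (r r' : ρ), t < t' → F t r ≤ F t' r' := by
    intro t t' r r' htt
    rcases hlex t t' r r' (Prod.Lex.lt_iff |>.mpr (Or.inl htt)) with h1 | h1
    · exact h1.le
    · exact h1.1.le
  by_cases key : ∀ t : τ, ∃ p : ρ × ρ, p.1 < p.2 ∧ F t p.1 < F t p.2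
  · right
    choose p hp1 hp2 using key
    exact ⟨fun t => F t (p t).2, fun t t' htt =>
      lt_of_le_of_lt (hle t t' _ _ htt) (hp2 t')⟩
  · left
    push_neg at key
    obtain ⟨t, ht⟩ := key
    refine ⟨fun r => G t r, fun r r' hrr => ?_⟩
    have hlt : toLex (t, r) < toLex (t, r') :=
      (Prod.Lex.lt_iff).mpr (Or.inr ⟨rfl, hrr⟩)
    rcases hlex t t r r' hlt with h1 | h1
    · exact absurd h1 (not_lt.mpr (ht (r, r') hrr))
    · exact h1.2
end

section
/- Let X be a linear order such that the product XX embeds in X. Then: (a) X is s-untranscendable, i.e., for all linear orders A and B, if X embeds in the product AB then X embeds in A or X embeds in B; and (b) X is product closed, i.e., whenever A ≼ X with X ⋠ A and B ≼ X with X ⋠ B, then AB ≼ X and X ⋠ AB. -/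
universe u

/- The product `AB` (replace each point of `B` by a copy of `A`, anti-lexicographic order)
is represented as `B ×ₗ A` (lexicographic on the `B`-coordinate first). -/
theorem stmt_5 (X : Type u) [LinearOrder X]
    (h : Embeds (X ×ₗ X) X) :
    (∀ (A B : Type u) [LinearOrder A] [LinearOrder B],
      Embeds X (B ×ₗ A) → Embeds X A ∨ Embeds X B) ∧
    (∀ (A B : Type u) [LinearOrder A] [LinearOrder B],
      Embeds A X → ¬ Embeds X A → Embeds B X → ¬ Embeds X B →
        Embeds (B ×ₗ A) X ∧ ¬ Embeds X (B ×ₗ A)) := by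
  obtain ⟨e, he⟩ := h
  have partA : ∀ (A B : Type u) [LinearOrder A] [LinearOrder B],
      Embeds X (B ×ₗ A) → Embeds X A ∨ Embeds X B := by
    intro A B _ _ hf
    obtain ⟨f, hf⟩ := hf
    by_cases hXA : Embeds X A
    · exact Or.inl hXA
    right
    set g : X → B := fun x => (ofLex (f x)).1 with hg
    have gmono : Monotone g := by
      intro x y hxy
      rcases lt_or_eq_of_le hxy with hlt | rfl
      · have h2 : f x < f y := hf hlt
        have h3 := (Prod.Lex.lt_iff (x := f x) (y := f y)).1 h2
        rcases h3 with h1 | ⟨h1, _⟩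
        · exact le_of_lt h1
        · exact le_of_eq h1
      · exact le_rfl
    have key : ∀ a : X, ∃ u v : X,
        g (e (toLex (a, u))) < g (e (toLex (a, v))) := by
      intro a
      by_contra hcon
      push_neg at hcon
      apply hXA
      refine ⟨fun u => (ofLex (f (e (toLex (a, u))))).2, ?_⟩
      intro u v huv
      have h1 : e (toLex (a, u)) < e (toLex (a, v)) := by
        apply he
        exact (Prod.Lex.lt_iff (x := toLex (a, u)) (y := toLex (a, v))).2 (Or.inr ⟨rfl, huv⟩)
      have h2 := (Prod.Lex.lt_iff (x := f (e (toLex (a, u))))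
        (y := f (e (toLex (a, v))))).1 (hf h1)
      rcases h2 with hb | ⟨_, hlt⟩
      · exact absurd hb (not_lt.2 (hcon u v))
      · exact hlt
    choose u v huv using key
    refine ⟨fun a => g (e (toLex (a, v a))), ?_⟩
    intro a a' haa
    calc g (e (toLex (a, v a))) ≤ g (e (toLex (a', u a'))) := by
          apply gmono
          apply le_of_lt
          apply he
          exact (Prod.Lex.lt_iff (x := toLex (a, v a)) (y := toLex (a', u a'))).2 (Or.inl haa)
      _ < g (e (toLex (a', v a'))) := huv a'
  refine ⟨partA, ?_⟩
  intro A B _ _ hA hXA hB hXB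
  obtain ⟨fa, hfa⟩ := hA
  obtain ⟨fb, hfb⟩ := hB
  constructor
  · refine ⟨fun p => e (toLex (fb (ofLex p).1, fa (ofLex p).2)), ?_⟩
    intro p q hpq
    apply he
    have h1 := (Prod.Lex.lt_iff (x := p) (y := q)).1 hpq
    apply (Prod.Lex.lt_iff (x := toLex (fb (ofLex p).1, fa (ofLex p).2))
      (y := toLex (fb (ofLex q).1, fa (ofLex q).2))).2
    rcases h1 with h1 | ⟨h1, h2⟩
    · exact Or.inl (hfb h1)
    · exact Or.inr ⟨by rw [h1]; rfl, hfa h2⟩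
  · intro hX
    rcases partA A B hX with h1 | h2
    · exact hXA h1
    · exact hXB h2
end

section
/- Let α be an ordinal with α > 2. Then the following are equivalent: (i) α = ω^(ω^β) for some ordinal β; (ii) α is product closed, i.e., for all ordinals γ, δ < α one has γ·δ < α; (iii) α is untranscendable, i.e., for all ordinals β, γ with β ≤ α and γ ≤ α and α ≤ β·γ, either α ≤ β or α ≤ γ. (Here · denotes ordinal multiplication and ^ ordinal exponentiation.) -/
theorem stmt_6 (α : Ordinal) (hα : 2 < α) :
    ((∃ β : Ordinal, α = Ordinal.omega0 ^ (Ordinal.omega0 ^ β)) ↔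
      (∀ γ δ : Ordinal, γ < α → δ < α → γ * δ < α)) ∧
    ((∀ γ δ : Ordinal, γ < α → δ < α → γ * δ < α) ↔
      (∀ β γ : Ordinal, β ≤ α → γ ≤ α → α ≤ β * γ → α ≤ β ∨ α ≤ γ)) := by
  constructor
  · rw [show (∀ γ δ : Ordinal, γ < α → δ < α → γ * δ < α) ↔ Ordinal.IsPrincipal (· * ·) α from Iff.rfl,
      Ordinal.principal_mul_iff_le_two_or_omega0_opow_opow]
    constructor
    · rintro ⟨β, rfl⟩; exact Or.inr ⟨β, rfl⟩
    · rintro (h | ⟨β, rfl⟩)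
      · exact absurd h hα.not_ge
      · exact ⟨β, rfl⟩
  · constructor
    · intro h β γ hβ hγ hle
      by_contra hc
      push_neg at hc
      exact absurd hle (h β γ hc.1 hc.2).not_ge
    · intro h γ δ hγ hδ
      by_contra hc
      rcases h γ δ hγ.le hδ.le (le_of_not_gt hc) with h' | h'
      · exact hγ.not_ge h'
      · exact hδ.not_ge h'
end

section
/- Let ρ and φ be linear orders such that 1 + ρφ embeds in φ (where ρφ is the product replacing each point of φ by a copy of ρ, and 1 + ρφ adjoins a new least element). Then the linear order τ = Σ_{n<ω} ρⁿ, the ω-indexed ordered sum whose n-th summand is the n-fold product ρⁿ = ρρ⋯ρ (with ρ⁰ a one-element order), embeds in φ. -/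
universe u

/-- The `n`-fold anti-lexicographic power `ρⁿ = ρρ⋯ρ`: tuples are compared at the
last coordinate where they differ.  `ρ⁰` is a one-element order. -/
def OrdPow (ρ : Type u) : ℕ → Type u
  | 0 => PUnit
  | n + 1 => ρ ×ₗ OrdPow ρ n

def ordPowLinearOrder (ρ : Type u) [LinearOrder ρ] : (n : ℕ) → LinearOrder (OrdPow ρ n)
  | 0 => inferInstanceAs (LinearOrder PUnit)
  | n + 1 =>
    letI := ordPowLinearOrder ρ n
    (inferInstance : LinearOrder (ρ ×ₗ OrdPow ρ n))

instance (ρ : Type u) [LinearOrder ρ] (n : ℕ) : LinearOrder (OrdPow ρ n) :=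
  ordPowLinearOrder ρ n

section Aux

variable {ρ : Type u} [LinearOrder ρ]

/-- Split off the least-significant coordinate of `ρ^{n+1}`. -/
def opSplit : ∀ n : ℕ, OrdPow ρ (n + 1) → OrdPow ρ n × ρ
  | 0, x => (PUnit.unit, (ofLex x).1)
  | n + 1, x =>
    let p := opSplit n (ofLex x).2
    (toLex ((ofLex x).1, p.1), p.2)

lemma opSplit_lt_iff : ∀ (n : ℕ) (x y : OrdPow ρ (n + 1)),
    x < y ↔ ((opSplit n x).1 < (opSplit n y).1 ∨
      ((opSplit n x).1 = (opSplit n y).1 ∧ (opSplit n x).2 < (opSplit n y).2)) := by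
  intro n
  induction n with
  | zero =>
    intro x y
    show toLex (ofLex x) < toLex (ofLex y) ↔ _
    rw [Prod.Lex.toLex_lt_toLex]
    simp only [opSplit]
    constructor
    · rintro (h | ⟨h1, h2⟩)
      · exact Or.inr ⟨rfl, h⟩
      · exact absurd h2 (Eq.not_lt (α := PUnit) (Subsingleton.elim _ _))
    · rintro (h | ⟨_, h2⟩)
      · exact absurd h (Eq.not_lt (α := PUnit) (Subsingleton.elim _ _))
      · exact Or.inl h2
  | succ n ih =>
    intro x y
    show toLex (ofLex x) < toLex (ofLex y) ↔ _
    rw [Prod.Lex.toLex_lt_toLex]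
    simp only [opSplit]
    rw [ih]
    constructor
    · rintro (h | ⟨h1, (h2 | ⟨h2, h3⟩)⟩)
      · exact Or.inl (Prod.Lex.toLex_lt_toLex.2 (Or.inl h))
      · exact Or.inl (Prod.Lex.toLex_lt_toLex.2 (Or.inr ⟨h1, h2⟩))
      · exact Or.inr ⟨by rw [h1, h2], h3⟩
    · rintro (h | ⟨h1, h2⟩)
      · rcases Prod.Lex.toLex_lt_toLex.1 h with h' | ⟨h1', h2'⟩
        · exact Or.inl h'
        · exact Or.inr ⟨h1', Or.inl h2'⟩
      · have h1' : ((ofLex x).1, (opSplit n (ofLex x).2).1)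
            = ((ofLex y).1, (opSplit n (ofLex y).2).1) := h1
        rw [Prod.mk.injEq] at h1'
        exact Or.inr ⟨h1'.1, Or.inr ⟨h1'.2, h2⟩⟩

variable {φ : Type u} [LinearOrder φ]

/-- The recursively defined embedding of `ρⁿ` into `φ`. -/
def opEmb (f : (PUnit ⊕ₗ (φ ×ₗ ρ)) → φ) : ∀ n : ℕ, OrdPow ρ n → φ
  | 0, _ => f (toLex (Sum.inl PUnit.unit))
  | n + 1, x => f (toLex (Sum.inr (toLex (opEmb f n (opSplit n x).1, (opSplit n x).2))))

lemma opEmb_zero_lt {f : (PUnit ⊕ₗ (φ ×ₗ ρ)) → φ} (hf : StrictMono f)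
    (a : OrdPow ρ 0) (n : ℕ) (b : OrdPow ρ (n + 1)) :
    opEmb f 0 a < opEmb f (n + 1) b :=
  hf (Sum.Lex.inl_lt_inr _ _)

lemma opEmb_lt_of_lt {f : (PUnit ⊕ₗ (φ ×ₗ ρ)) → φ} (hf : StrictMono f) :
    ∀ n m : ℕ, m < n → ∀ (a : OrdPow ρ m) (b : OrdPow ρ n),
    opEmb f m a < opEmb f n b := by
  intro n
  induction n with
  | zero => intro m hm; omega
  | succ n ih =>
    intro m hm a b
    match m, hm with
    | 0, _ => exact opEmb_zero_lt hf a n b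
    | m + 1, hm =>
      have hmn : m < n := by omega
      apply hf
      apply Sum.Lex.inr_lt_inr_iff.2
      exact Prod.Lex.toLex_lt_toLex.2 (Or.inl (ih m hmn _ _))

lemma opEmb_strictMono {f : (PUnit ⊕ₗ (φ ×ₗ ρ)) → φ} (hf : StrictMono f) :
    ∀ n : ℕ, StrictMono (opEmb (ρ := ρ) f n) := by
  intro n
  induction n with
  | zero => intro a b hab; exact absurd hab (Eq.not_lt (α := PUnit) (Subsingleton.elim _ _))
  | succ n ih =>
    intro a b hab
    rcases (opSplit_lt_iff n a b).1 hab with h | ⟨h1, h2⟩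
    · exact hf (Sum.Lex.inr_lt_inr_iff.2 (Prod.Lex.toLex_lt_toLex.2 (Or.inl (ih h))))
    · exact hf (Sum.Lex.inr_lt_inr_iff.2 (Prod.Lex.toLex_lt_toLex.2 (Or.inr ⟨by rw [h1], h2⟩)))

end Aux

/- The product `ρφ` (replace each point of `φ` by a copy of `ρ`) is represented as
`φ ×ₗ ρ`; the ordered sum `Σ_{n<ω} ρⁿ` is represented as the lexicographic sigma
type `Σₗ n : ℕ, OrdPow ρ n`. -/
theorem stmt_7 (ρ φ : Type u) [LinearOrder ρ] [LinearOrder φ]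
    (h : Embeds (PUnit ⊕ₗ (φ ×ₗ ρ)) φ) :
    Embeds (Σₗ n : ℕ, OrdPow ρ n) φ := by
  obtain ⟨f, hf⟩ := h
  refine ⟨fun x => opEmb f (ofLex x).1 (ofLex x).2, ?_⟩
  intro x y hxy
  obtain ⟨n, a⟩ := ofLex x
  obtain ⟨m, b⟩ := ofLex y
  cases hxy with
  | left _ _ hlt => exact opEmb_lt_of_lt hf _ _ hlt _ _
  | right _ _ hlt => exact opEmb_strictMono hf _ hlt
end

section
/- Let m ≥ 1 and let φ₀, φ₁, …, φ_m and ψ₀, ψ₁, …, ψ_{m−1} be linear orders with each φ_i nonempty (i ≤ m). If the ordered sum φ₀ + φ₁ + ⋯ + φ_m embeds in the ordered sum ψ₀ + ψ₁ + ⋯ + ψ_{m−1}, then there is some i < m such that 1 + φ_{i+1} embeds in ψ_i. -/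
universe u

lemma extract_lt {ι : Type*} [LinearOrder ι] {ψ : ι → Type*} [∀ k, LinearOrder (ψ k)]
    {i : ι} {s t : Σₗ k, ψ k} (hst : s < t) (hs : s.1 = i) (ht : t.1 = i) :
    (hs ▸ s.2 : ψ i) < ht ▸ t.2 := by
  obtain ⟨a, u⟩ := s
  obtain ⟨b, v⟩ := t
  dsimp at hs ht
  subst hs
  subst ht
  rcases Sigma.Lex.lt_def.1 hst with h1 | ⟨h1, h2⟩
  · exact absurd h1 (lt_irrefl _)
  · exact h2

theorem stmt_8 (m : ℕ) (hm : 1 ≤ m)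
    (φ : Fin (m + 1) → Type u) (ψ : Fin m → Type u)
    [∀ i, LinearOrder (φ i)] [∀ i, LinearOrder (ψ i)]
    (hne : ∀ i, Nonempty (φ i))
    (h : Embeds (Σₗ i, φ i) (Σₗ i, ψ i)) :
    ∃ i : Fin m, Embeds (PUnit ⊕ₗ φ i.succ) (ψ i) := by
  obtain ⟨f, hf⟩ := h
  by_contra hcon
  push_neg at hcon
  have a : ∀ i, φ i := fun i => Classical.choice (hne i)
  set c : ∀ j : Fin (m + 1), φ j → ℕ := fun j x => ((f ⟨j, x⟩).1 : ℕ) with hcdef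
  have hmono : ∀ (j j' : Fin (m + 1)) (x : φ j) (y : φ j'), j < j' → c j x ≤ c j' y := by
    intro j j' x y hj
    have hlt : (toLex ⟨j, x⟩ : Σₗ i, φ i) < toLex ⟨j', y⟩ := Sigma.Lex.lt_def.2 (Or.inl hj)
    rcases Sigma.Lex.le_def.1 (hf hlt).le with h1 | ⟨h1, _⟩
    · exact_mod_cast h1.le
    · exact le_of_eq (congrArg Fin.val h1)
  set C : Fin (m + 1) → ℕ := fun j => sSup (Set.range (c j)) with hCdef
  have hCmem : ∀ j, C j ∈ Set.range (c j) := by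
    intro j
    exact Nat.sSup_mem ⟨_, Set.mem_range_self (a j)⟩
      ⟨m, by rintro _ ⟨x, rfl⟩; exact (f ⟨j, x⟩).1.isLt.le⟩
  have hCle : ∀ j (x : φ j), c j x ≤ C j := by
    intro j x
    exact le_csSup ⟨m, by rintro _ ⟨x, rfl⟩; exact (f ⟨j, x⟩).1.isLt.le⟩
      (Set.mem_range_self x)
  have key : ∀ k (hk : k < m + 1), k ≤ C ⟨k, hk⟩ := by
    intro k
    induction k with
    | zero => intro hk; exact Nat.zero_le _
    | succ j ih =>
      intro hk
      have hj : j < m + 1 := by omega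
      have hCj : j ≤ C ⟨j, hj⟩ := ih hj
      by_contra hlt
      push_neg at hlt
      -- C ⟨j+1⟩ ≤ j
      have hCj1 : C ⟨j + 1, hk⟩ ≤ j := by omega
      obtain ⟨xs, hxs⟩ := hCmem ⟨j, hj⟩
      -- every element of block j+1 has component exactly j, and C ⟨j⟩ = j
      have hup : ∀ x : φ ⟨j + 1, hk⟩, c _ x = j := by
        intro x
        have h1 : c _ x ≤ j := (hCle _ x).trans hCj1
        have h2 : C ⟨j, hj⟩ ≤ c _ x := hxs ▸ hmono ⟨j, hj⟩ ⟨j + 1, hk⟩ xs x (by simp)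
        omega
      have hxsj : c ⟨j, hj⟩ xs = j := by
        have h2 : C ⟨j, hj⟩ ≤ c _ (a ⟨j + 1, hk⟩) :=
          hxs ▸ hmono ⟨j, hj⟩ ⟨j + 1, hk⟩ xs _ (by simp)
        have := hup (a ⟨j + 1, hk⟩)
        omega
      have hjm : j < m := by omega
      set i : Fin m := ⟨j, hjm⟩ with hidef
      have hisucc : (i.succ : Fin (m + 1)) = ⟨j + 1, hk⟩ := rfl
      have hcomp : ∀ x : φ i.succ, (f ⟨i.succ, x⟩).1 = i := by
        intro x
        exact Fin.ext (hup (hisucc ▸ x))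
      have hcomp0 : (f ⟨⟨j, hj⟩, xs⟩).1 = i := Fin.ext hxsj
      refine hcon i ⟨fun z => Sum.rec (fun _ => hcomp0 ▸ (f ⟨⟨j, hj⟩, xs⟩).2)
        (fun x => hcomp x ▸ (f ⟨i.succ, x⟩).2) (ofLex z), ?_⟩
      intro z w hzw
      rcases z with z | z <;> rcases w with w | w
      · exact absurd (Sum.Lex.inl_lt_inl_iff.1 hzw) (lt_irrefl _)
      · have hfl : f ⟨⟨j, hj⟩, xs⟩ < f ⟨i.succ, w⟩ := by
          refine hf (show (toLex ⟨⟨j, hj⟩, xs⟩ : Σₗ k, φ k) < toLex ⟨i.succ, w⟩ from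
            Sigma.Lex.lt_def.2 (Or.inl ?_))
          show (⟨j, hj⟩ : Fin (m + 1)) < i.succ
          simp only [Fin.lt_def, Fin.val_succ]
          exact Nat.lt_succ_self j
        exact extract_lt hfl hcomp0 (hcomp w)
      · exact absurd hzw Sum.Lex.not_inr_lt_inl
      · have hzw' : z < w := Sum.Lex.inr_lt_inr_iff.1 hzw
        have hfl : f ⟨i.succ, z⟩ < f ⟨i.succ, w⟩ := by
          exact hf (show (toLex ⟨i.succ, z⟩ : Σₗ k, φ k) < toLex ⟨i.succ, w⟩ from
            Sigma.Lex.lt_def.2 (Or.inr ⟨rfl, hzw'⟩))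
        exact extract_lt hfl (hcomp z) (hcomp w)
  have := key m (by omega)
  obtain ⟨x, hx⟩ := hCmem ⟨m, by omega⟩
  have : c ⟨m, by omega⟩ x < m := (f ⟨⟨m, _⟩, x⟩).1.isLt
  omega
end

section
/- Let X be a homogeneous linear order, i.e., for all a < b in X, X embeds in the closed interval [a, b]. Then X is s-untranscendable: for all linear orders A and B, if X embeds in the product AB, then X embeds in A or X embeds in B. -/
universe u

/- The product `AB` (replace each point of `B` by a copy of `A`, anti-lexicographic
order) is represented as `B ×ₗ A`. -/
theorem stmt_10 (X : Type u) [LinearOrder X]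
    (hhom : ∀ a b : X, a < b → Embeds X ↥(Set.Icc a b)) :
    ∀ (A B : Type v) [LinearOrder A] [LinearOrder B],
      Embeds X (B ×ₗ A) → Embeds X A ∨ Embeds X B := by
  intro A B _ _ hXBA
  obtain ⟨f, hf⟩ := hXBA
  by_cases h : ∃ a b : X, a < b ∧ (ofLex (f a)).1 = (ofLex (f b)).1
  · left
    obtain ⟨a, b, hab, he⟩ := h
    obtain ⟨g, hg⟩ := hhom a b hab
    -- first coordinate is constant on [a,b]
    have hfst : ∀ z : X, a ≤ z → z ≤ b → (ofLex (f z)).1 = (ofLex (f a)).1 := by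
      intro z haz hzb
      have h1 : f a ≤ f z := hf.monotone haz
      have h2 : f z ≤ f b := hf.monotone hzb
      rcases Prod.Lex.le_iff.mp h1 with h1 | ⟨h1, _⟩
      · rcases Prod.Lex.le_iff.mp h2 with h2 | ⟨h2, _⟩
        · exact absurd (he ▸ lt_trans h1 h2) (lt_irrefl _)
        · exact absurd (he ▸ h2 ▸ h1) (lt_irrefl _)
      · exact h1.symm
    refine ⟨fun x => (ofLex (f ((g x : ↥(Set.Icc a b)) : X))).2, fun x y hxy => ?_⟩
    have hgx := (g x).2
    have hgy := (g y).2
    have hlt : f ((g x : ↥(Set.Icc a b)) : X) < f ((g y : ↥(Set.Icc a b)) : X) :=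
      hf (Subtype.coe_lt_coe.mpr (hg hxy))
    rcases Prod.Lex.lt_iff.mp hlt with h1 | ⟨_, h2⟩
    · rw [hfst _ hgx.1 hgx.2, hfst _ hgy.1 hgy.2] at h1
      exact absurd h1 (lt_irrefl _)
    · exact h2
  · right
    refine ⟨fun x => (ofLex (f x)).1, fun x y hxy => ?_⟩
    have hlt := hf hxy
    rcases Prod.Lex.lt_iff.mp hlt with h1 | ⟨h1, _⟩
    · exact h1
    · exact absurd ⟨x, y, hxy, h1⟩ h
end

section
/- Let X be a homogeneous linear order such that the product 2X (each point of X replaced by two points) embeds in X. Then the square XX embeds in X. -/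
universe u

/- The product `2X` (each point of `X` replaced by two points) is represented as
`X ×ₗ Bool`, and the square `XX` as `X ×ₗ X`. -/
theorem stmt_11 (X : Type u) [LinearOrder X]
    (hhom : ∀ a b : X, a < b → Embeds X ↥(Set.Icc a b))
    (h2 : Embeds (X ×ₗ Bool) X) :
    Embeds (X ×ₗ X) X := by
  obtain ⟨g, hg⟩ := h2
  have hlt : ∀ x : X, g (toLex (x, false)) < g (toLex (x, true)) := by
    intro x
    apply hg
    rw [Prod.Lex.lt_iff]
    exact Or.inr ⟨rfl, by simp⟩
  choose h hh using fun x => hhom _ _ (hlt x)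
  refine ⟨fun p => (h (ofLex p).1 ((ofLex p).2) : X), ?_⟩
  intro p q hpq
  have hpq' : toLex (ofLex p) < toLex (ofLex q) := hpq
  rw [Prod.Lex.lt_iff] at hpq'
  replace hpq := hpq'
  rcases hpq with h1 | ⟨h1, h2'⟩
  · calc (h (ofLex p).1 ((ofLex p).2) : X) ≤ g (toLex ((ofLex p).1, true)) :=
          (h (ofLex p).1 ((ofLex p).2)).2.2
      _ < g (toLex ((ofLex q).1, false)) := hg (by rw [Prod.Lex.lt_iff]; exact Or.inl h1)
      _ ≤ (h (ofLex q).1 ((ofLex q).2) : X) := (h (ofLex q).1 ((ofLex q).2)).2.1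
  · have := (hh (ofLex p).1) h2'
    show ((h (ofLex p).1 (ofLex p).2 : X)) < (h (ofLex q).1 (ofLex q).2 : X)
    rw [show (ofLex p).1 = (ofLex q).1 from h1] at this ⊢
    exact_mod_cast this
end

section
/- Let X be an s-untranscendable linear order such that X + X embeds in X. Then X is equimorphic to a homogeneous linear order: there exists a linear order Y such that Y ≼ X, X ≼ Y, and for all a < b in Y, Y embeds in the closed interval [a, b] of Y. -/
universe u

/-- `Y` is homogeneous: `Y` embeds in each of its nondegenerate closed intervals. -/
def Homogeneous (Y : Type u) [LinearOrder Y] : Prop :=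
  ∀ a b : Y, a < b → Embeds Y ↥(Set.Icc a b)

def Wrap (X : Type u) : Type u := X
def Wrap.mk {X : Type u} (x : X) : Wrap X := x
def Wrap.un {X : Type u} (x : Wrap X) : X := x

section Aux
variable {X : Type u} [LinearOrder X]

lemma embeds_mono {S T : Set X} (hST : S ⊆ T) (h : Embeds X ↥S) : Embeds X ↥T := by
  obtain ⟨f, hf⟩ := h
  exact ⟨fun x => ⟨(f x).1, hST (f x).2⟩,
    fun a b hab => Subtype.mk_lt_mk.mpr (Subtype.coe_lt_coe.mpr (hf hab))⟩

lemma embeds_map {Z : Type v} [LinearOrder Z] {f : X → Z} (hf : StrictMono f) {u v : X}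
    (huv : Embeds X ↥(Set.Icc u v)) : Embeds X ↥(Set.Icc (f u) (f v)) := by
  obtain ⟨g, hg⟩ := huv
  refine ⟨fun x => ⟨f (g x).1, Set.mem_Icc.mpr ⟨hf.monotone (g x).2.1, hf.monotone (g x).2.2⟩⟩, ?_⟩
  intro a b hab
  exact Subtype.mk_lt_mk.mpr (hf (Subtype.coe_lt_coe.mpr (hg hab)))

lemma embeds_split (j : X ⊕ₗ X → X) (hj : StrictMono j) {S₁ S₂ : Set X}
    (h12 : ∀ s₁ ∈ S₁, ∀ s₂ ∈ S₂, s₁ < s₂) (hE : Embeds X ↥(S₁ ∪ S₂)) :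
    Embeds X ↥S₁ ∨ Embeds X ↥S₂ := by
  obtain ⟨f, hf⟩ := hE
  by_cases hex : ∃ x : X, (f (j (toLex (Sum.inr x)))).1 ∈ S₁
  · left
    obtain ⟨x₁, hx₁⟩ := hex
    refine ⟨fun x => ⟨(f (j (toLex (Sum.inl x)))).1, ?_⟩, ?_⟩
    · have hlt : (f (j (toLex (Sum.inl x)))).1 < (f (j (toLex (Sum.inr x₁)))).1 :=
        Subtype.coe_lt_coe.mpr (hf (hj (Sum.Lex.inl_lt_inr x x₁)))
      rcases (f (j (toLex (Sum.inl x)))).2 with h | h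
      · exact h
      · exact absurd (h12 _ hx₁ _ h) (asymm hlt)
    · intro a b hab
      exact Subtype.mk_lt_mk.mpr
        (Subtype.coe_lt_coe.mpr (hf (hj (Sum.Lex.inl_lt_inl_iff.mpr hab))))
  · right
    push_neg at hex
    refine ⟨fun x => ⟨(f (j (toLex (Sum.inr x)))).1, ?_⟩, ?_⟩
    · rcases (f (j (toLex (Sum.inr x)))).2 with h | h
      · exact absurd h (hex x)
      · exact h
    · intro a b hab
      exact Subtype.mk_lt_mk.mpr
        (Subtype.coe_lt_coe.mpr (hf (hj (Sum.Lex.inr_lt_inr_iff.mpr hab))))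

lemma pair_in (j : X ⊕ₗ X → X) (hj : StrictMono j) (x₀ : X) {S : Set X}
    (hS : Embeds X ↥S) :
    ∃ a b : X, a ∈ S ∧ b ∈ S ∧ a < b ∧ Embeds X ↥(Set.Icc a b) := by
  obtain ⟨h, hh⟩ := hS
  refine ⟨(h (j (toLex (Sum.inl (j (toLex (Sum.inl x₀))))))).1,
    (h (j (toLex (Sum.inr x₀)))).1, (h _).2, (h _).2, ?_, ?_⟩
  · exact Subtype.coe_lt_coe.mpr (hh (hj (Sum.Lex.inl_lt_inr _ _)))
  · refine ⟨fun x => ⟨(h (j (toLex (Sum.inl (j (toLex (Sum.inr x))))))).1, ?_, ?_⟩, ?_⟩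
    · exact le_of_lt (Subtype.coe_lt_coe.mpr
        (hh (hj (Sum.Lex.inl_lt_inl_iff.mpr (hj (Sum.Lex.inl_lt_inr _ _))))))
    · exact le_of_lt (Subtype.coe_lt_coe.mpr (hh (hj (Sum.Lex.inl_lt_inr _ _))))
    · intro p q hpq
      exact Subtype.mk_lt_mk.mpr (Subtype.coe_lt_coe.mpr
        (hh (hj (Sum.Lex.inl_lt_inl_iff.mpr (hj (Sum.Lex.inr_lt_inr_iff.mpr hpq))))))

end Aux
def ERel (X : Type u) [LinearOrder X] (a b : X) : Prop := ¬ Embeds X ↥(Set.uIcc a b)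

section Aux2
variable {X : Type u} [LinearOrder X]

lemma erel_iff_icc {a b : X} (hab : a ≤ b) :
    ERel X a b ↔ ¬ Embeds X ↥(Set.Icc a b) :=
  iff_of_eq (congrArg (fun s : Set X => ¬ Embeds X ↥s) (Set.uIcc_of_le hab))

lemma erel_symm {a b : X} (h : ERel X a b) : ERel X b a := by
  intro hE
  exact h (by rwa [Set.uIcc_comm] at hE)

lemma erel_refl (j : X ⊕ₗ X → X) (hj : StrictMono j) (x₀ : X) (a : X) : ERel X a a := by
  intro hE
  obtain ⟨f, hf⟩ := hE
  have h1 : f (j (toLex (Sum.inl x₀))) < f (j (toLex (Sum.inr x₀))) :=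
    hf (hj (Sum.Lex.inl_lt_inr _ _))
  have h2 : ∀ z : ↥(Set.uIcc a a), z = ⟨a, by simp⟩ := by
    intro z
    ext
    simpa [Set.uIcc_self] using z.2
  rw [h2 (f (j (toLex (Sum.inl x₀)))), h2 (f (j (toLex (Sum.inr x₀))))] at h1
  exact lt_irrefl _ h1

lemma erel_conv {a b c : X} (hab : a ≤ b) (hbc : b ≤ c) (h : ERel X a c) :
    ERel X a b ∧ ERel X b c := by
  constructor
  · refine (erel_iff_icc hab).mpr fun hE => (erel_iff_icc (hab.trans hbc)).mp h ?_
    exact embeds_mono (Set.Icc_subset_Icc le_rfl hbc) hE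
  · refine (erel_iff_icc hbc).mpr fun hE => (erel_iff_icc (hab.trans hbc)).mp h ?_
    exact embeds_mono (Set.Icc_subset_Icc hab le_rfl) hE

lemma erel_trans_aux (j : X ⊕ₗ X → X) (hj : StrictMono j) {a b c : X} (hac : a ≤ c)
    (h1 : ERel X a b) (h2 : ERel X b c) : ERel X a c := by
  refine (erel_iff_icc hac).mpr fun hE => ?_
  rcases le_or_gt b a with hba | hab
  · exact (erel_iff_icc (hba.trans hac)).mp h2 (embeds_mono (Set.Icc_subset_Icc hba le_rfl) hE)
  rcases le_or_gt c b with hcb | hbc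
  · exact (erel_iff_icc (hac.trans hcb)).mp h1 (embeds_mono (Set.Icc_subset_Icc le_rfl hcb) hE)
  have hsub : Set.Icc a c ⊆ Set.Icc a b ∪ Set.Ioc b c := by
    intro z hz
    rcases le_or_gt z b with h | h
    · exact Or.inl ⟨hz.1, h⟩
    · exact Or.inr ⟨h, hz.2⟩
  have h12 : ∀ s₁ ∈ Set.Icc a b, ∀ s₂ ∈ Set.Ioc b c, s₁ < s₂ :=
    fun s₁ hs₁ s₂ hs₂ => lt_of_le_of_lt hs₁.2 hs₂.1
  rcases embeds_split j hj h12 (embeds_mono hsub hE) with h | h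
  · exact (erel_iff_icc hab.le).mp h1 h
  · exact (erel_iff_icc hbc.le).mp h2 (embeds_mono Set.Ioc_subset_Icc_self h)

lemma erel_trans (j : X ⊕ₗ X → X) (hj : StrictMono j) {a b c : X}
    (h1 : ERel X a b) (h2 : ERel X b c) : ERel X a c := by
  rcases le_total a c with hac | hca
  · exact erel_trans_aux j hj hac h1 h2
  · exact erel_symm (erel_trans_aux j hj hca (erel_symm h2) (erel_symm h1))

lemma pair_univ (j : X ⊕ₗ X → X) (hj : StrictMono j) (x₀ : X) :
    ∃ a b : X, a < b ∧ Embeds X ↥(Set.Icc a b) := by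
  obtain ⟨a, b, -, -, hab, hE⟩ := pair_in j hj x₀ (S := Set.univ)
    ⟨fun x => ⟨x, trivial⟩, fun p q h => Subtype.mk_lt_mk.mpr h⟩
  exact ⟨a, b, hab, hE⟩

lemma erel_middle (j : X ⊕ₗ X → X) (hj : StrictMono j) (x₀ : X) {a c : X}
    (hac : a < c) (hnR : ¬ ERel X a c) :
    ∃ b : X, a < b ∧ b < c ∧ ¬ ERel X a b ∧ ¬ ERel X b c := by
  by_contra hcon
  push_neg at hcon
  have key : ∀ z ∈ Set.Icc a c, ERel X a z ∨ ERel X z c := by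
    intro z hz
    by_contra hz2
    push_neg at hz2
    have h1 : a < z := lt_of_le_of_ne hz.1 (by rintro rfl; exact hz2.1 (erel_refl j hj x₀ a))
    have h2 : z < c := lt_of_le_of_ne hz.2 (by rintro rfl; exact hz2.2 (erel_refl j hj x₀ z))
    exact hz2.2 (hcon z h1 h2 hz2.1)
  set L : Set X := {z : X | z ∈ Set.Icc a c ∧ ERel X a z} with hL
  set Rt : Set X := {z : X | z ∈ Set.Icc a c ∧ ¬ ERel X a z} with hRt
  have h12 : ∀ s₁ ∈ L, ∀ s₂ ∈ Rt, s₁ < s₂ := by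
    intro s₁ hs₁ s₂ hs₂
    rcases lt_or_ge s₁ s₂ with h | h
    · exact h
    · exact absurd ((erel_conv hs₂.1.1 h hs₁.2).1) hs₂.2
  have hsub : Set.Icc a c ⊆ L ∪ Rt := by
    intro z hz
    by_cases hR : ERel X a z
    · exact Or.inl ⟨hz, hR⟩
    · exact Or.inr ⟨hz, hR⟩
  have hE : Embeds X ↥(Set.Icc a c) := by
    by_contra hc2
    exact hnR ((erel_iff_icc hac.le).mpr hc2)
  rcases embeds_split j hj h12 (embeds_mono hsub hE) with h | h
  · obtain ⟨u, v, hu, hv, huv, hEuv⟩ := pair_in j hj x₀ h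
    have : ERel X u v := erel_trans j hj (erel_symm hu.2) hv.2
    exact (erel_iff_icc huv.le).mp this hEuv
  · obtain ⟨u, v, hu, hv, huv, hEuv⟩ := pair_in j hj x₀ h
    have hub : ERel X u c := by
      rcases eq_or_lt_of_le hu.1.2 with heq | hlt
      · exact heq ▸ erel_refl j hj x₀ u
      · exact (key u hu.1).resolve_left hu.2
    have hvb : ERel X v c := by
      rcases eq_or_lt_of_le hv.1.2 with heq | hlt
      · exact heq ▸ erel_refl j hj x₀ v
      · exact (key v hv.1).resolve_left hv.2
    exact (erel_iff_icc huv.le).mp (erel_trans j hj hub (erel_symm hvb)) hEuv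

end Aux2

/- The product `AB` (replace each point of `B` by a copy of `A`) is represented as
`B ×ₗ A`; the sum `X + X` as `X ⊕ₗ X`. -/
theorem stmt_12 (X : Type u) [LinearOrder X]
    (hsu : ∀ (A B : Type u) [LinearOrder A] [LinearOrder B],
      Embeds X (B ×ₗ A) → Embeds X A ∨ Embeds X B)
    (h2 : Embeds (X ⊕ₗ X) X) :
    ∃ (Y : Type u) (instY : LinearOrder Y),
      @Embeds Y X instY _ ∧ @Embeds X Y _ instY ∧ @Homogeneous Y instY := by
  classical
  obtain hX | hX := isEmpty_or_nonempty X
  · exact ⟨X, inferInstance, ⟨id, fun a b h => h⟩, ⟨id, fun a b h => h⟩,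
      fun a b _ => (hX.false a).elim⟩
  obtain ⟨x₀⟩ := hX
  obtain ⟨j, hj⟩ := h2
  -- the setoid of the condensation
  have hEquiv : Equivalence (ERel X) :=
    ⟨erel_refl j hj x₀, fun {a b} h => erel_symm h, fun {a b c} h1 h2 => erel_trans j hj h1 h2⟩
  set s : Setoid X := ⟨ERel X, hEquiv⟩ with hs
  set ρ : X → X := fun x => (Quotient.mk s x).out with hρ
  have hρ1 : ∀ x : X, ERel X (ρ x) x := by
    intro x
    have := Quotient.exact ((Quotient.mk s x).out_eq)
    exact this
  have hρeq : ∀ {x y : X}, ERel X x y → ρ x = ρ y := by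
    intro x y h
    have : Quotient.mk s x = Quotient.mk s y := Quotient.sound h
    simp only [hρ, this]
  have hfix : ∀ x : X, ρ (ρ x) = ρ x := fun x => hρeq (hρ1 x)
  have mono_rep : ∀ {x y : X}, x < y → ¬ ERel X x y → ρ x < ρ y := by
    intro x y hxy hnR
    have hx' : ERel X (ρ x) x := hρ1 x
    have hy' : ERel X (ρ y) y := hρ1 y
    have hne : ρ x ≠ ρ y := by
      intro he
      exact hnR (erel_trans j hj (erel_symm hx') (by rw [he]; exact hy'))
    rcases lt_trichotomy (ρ x) (ρ y) with h | h | h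
    · exact h
    · exact absurd h hne
    · exfalso
      rcases lt_or_ge (ρ y) x with h1 | h1
      · exact hnR ((erel_conv h1.le hxy.le hy').2)
      · have h3 := (erel_conv h1 h.le (erel_symm hx')).1
        exact hnR (erel_trans j hj h3 hy')
  have ρmono : Monotone ρ := by
    intro x y hxy
    rcases eq_or_lt_of_le hxy with rfl | h
    · exact le_rfl
    by_cases hR : ERel X x y
    · exact (hρeq hR).le
    · exact (mono_rep h hR).le
  -- Y and π
  set T : Set X := Set.range ρ with hT
  have hπmem : ∀ x : X, ρ x ∈ T := fun x => ⟨x, rfl⟩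
  set π : X → ↥T := fun x => ⟨ρ x, hπmem x⟩ with hπ
  have hTfix : ∀ y : ↥T, ρ y.1 = y.1 := by
    rintro ⟨_, z, rfl⟩
    exact hfix z
  have hTne : ∀ {y y' : ↥T}, y ≠ y' → ¬ ERel X y.1 y'.1 := by
    intro y y' hne hR
    exact hne (Subtype.ext (by rw [← hTfix y, ← hTfix y', hρeq hR]))
  obtain ⟨a₁, b₁, hab₁, hE₁⟩ := pair_univ j hj x₀
  have hnR₁ : ¬ ERel X a₁ b₁ := fun h => (erel_iff_icc hab₁.le).mp h hE₁
  -- linear order on Wrap X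
  set ltC : Wrap X → Wrap X → Prop := fun u v =>
    WellOrderingRel (ρ (Wrap.un u)) (ρ (Wrap.un v)) ∨
      (ρ (Wrap.un u) = ρ (Wrap.un v) ∧ Wrap.un u < Wrap.un v) with hltC
  haveI instTri : IsTrichotomous (Wrap X) ltC := by
    constructor
    intro u v
    suffices H : ltC u v ∨ u = v ∨ ltC v u by
      intro h1 h2
      rcases H with H | H | H
      exacts [absurd H h1, H, absurd H h2]
    rcases trichotomous_of WellOrderingRel (ρ (Wrap.un u)) (ρ (Wrap.un v)) with h | h | h
    · exact Or.inl (Or.inl h)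
    · rcases lt_trichotomy (Wrap.un u) (Wrap.un v) with h' | h' | h'
      · exact Or.inl (Or.inr ⟨h, h'⟩)
      · exact Or.inr (Or.inl h')
      · exact Or.inr (Or.inr (Or.inr ⟨h.symm, h'⟩))
    · exact Or.inr (Or.inr (Or.inl h))
  haveI instTrans : IsTrans (Wrap X) ltC := by
    constructor
    intro u v w huv hvw
    rcases huv with h1 | ⟨e1, l1⟩ <;> rcases hvw with h2 | ⟨e2, l2⟩
    · exact Or.inl (trans_of WellOrderingRel h1 h2)
    · exact Or.inl (by rw [← e2]; exact h1)
    · exact Or.inl (by rw [e1]; exact h2)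
    · exact Or.inr ⟨e1.trans e2, l1.trans l2⟩
  haveI instIrr : IsIrrefl (Wrap X) ltC := by
    constructor
    intro u h
    rcases h with h | ⟨_, l⟩
    · exact irrefl_of WellOrderingRel _ h
    · exact lt_irrefl _ l
  haveI instSTO : IsStrictTotalOrder (Wrap X) ltC :=
    { toTrichotomous := instTri, toIsStrictOrder := { toIrrefl := instIrr, toIsTrans := instTrans } }
  letI instDec : DecidableRel ltC := fun _ _ => Classical.propDecidable _
  letI instC : LinearOrder (Wrap X) := linearOrderOfSTO ltC
  have hltC_iff : ∀ u v : Wrap X, u < v ↔ ltC u v := fun u v => Iff.rfl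
  -- the crucial embedding
  have emb : Embeds X (↥T ×ₗ Wrap X) := by
    refine ⟨fun x => toLex (π x, Wrap.mk x), ?_⟩
    intro p q hpq
    rw [Prod.Lex.lt_iff]
    by_cases hR : ERel X p q
    · exact Or.inr ⟨Subtype.ext (hρeq hR), Or.inr ⟨hρeq hR, hpq⟩⟩
    · exact Or.inl (Subtype.mk_lt_mk.mpr (mono_rep hpq hR))
  have hXY : Embeds X ↥T := by
    rcases hsu (Wrap X) (↥T) emb with hC | hY'
    · exfalso
      obtain ⟨f, hf⟩ := hC
      have step : ∀ y y' : ↥T, y < y' →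
          WellOrderingRel (ρ (Wrap.un (f y.1))) (ρ (Wrap.un (f y'.1))) := by
        intro y y' hyy'
        have hlt : y.1 < y'.1 := Subtype.coe_lt_coe.mpr hyy'
        have hnR : ¬ ERel X y.1 y'.1 := hTne (ne_of_lt hyy')
        have hEyy : Embeds X ↥(Set.Icc y.1 y'.1) := by
          by_contra hc
          exact hnR ((erel_iff_icc hlt.le).mpr hc)
        rcases (hltC_iff _ _).mp (hf hlt) with hW | ⟨heq, hl⟩
        · exact hW
        exfalso
        obtain ⟨g, hg⟩ := hEyy
        have hbetween : ∀ z : X, y.1 ≤ z → z ≤ y'.1 →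
            ρ (Wrap.un (f z)) = ρ (Wrap.un (f y.1)) ∧
              Wrap.un (f y.1) ≤ Wrap.un (f z) ∧ Wrap.un (f z) ≤ Wrap.un (f y'.1) := by
          intro z h1 h2
          have hu : f y.1 ≤ f z := hf.monotone h1
          have hv : f z ≤ f y'.1 := hf.monotone h2
          have hrr : ρ (Wrap.un (f z)) = ρ (Wrap.un (f y.1)) := by
            by_contra hne
            rcases eq_or_lt_of_le hu with he | hlt1
            · exact hne (by rw [← he])
            rcases eq_or_lt_of_le hv with he | hlt2
            · exact hne (by rw [he, ← heq])
            rcases (hltC_iff _ _).mp hlt1 with hW1 | ⟨he1, _⟩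
            · rcases (hltC_iff _ _).mp hlt2 with hW2 | ⟨he2, _⟩
              · rw [← heq] at hW2
                exact irrefl_of WellOrderingRel _ (trans_of WellOrderingRel hW1 hW2)
              · exact hne (he2.trans heq.symm)
            · exact hne he1.symm
          refine ⟨hrr, ?_, ?_⟩
          · rcases eq_or_lt_of_le hu with he | hlt1
            · exact le_of_eq (by rw [he])
            rcases (hltC_iff _ _).mp hlt1 with hW1 | ⟨_, hl1⟩
            · rw [hrr] at hW1
              exact absurd hW1 (irrefl_of WellOrderingRel _)
            · exact hl1.le
          · rcases eq_or_lt_of_le hv with he | hlt2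
            · exact le_of_eq (by rw [he])
            rcases (hltC_iff _ _).mp hlt2 with hW2 | ⟨_, hl2⟩
            · rw [hrr, ← heq] at hW2
              exact absurd hW2 (irrefl_of WellOrderingRel _)
            · exact hl2.le
        have hEmb2 : Embeds X ↥(Set.Icc (Wrap.un (f y.1)) (Wrap.un (f y'.1))) := by
          refine ⟨fun x => ⟨Wrap.un (f (g x).1),
            (hbetween _ (g x).2.1 (g x).2.2).2.1, (hbetween _ (g x).2.1 (g x).2.2).2.2⟩, ?_⟩
          intro p q hpq
          have hzlt : (g p).1 < (g q).1 := Subtype.coe_lt_coe.mpr (hg hpq)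
          rcases (hltC_iff _ _).mp (hf hzlt) with hW | ⟨_, hl'⟩
          · exfalso
            rw [(hbetween _ (g p).2.1 (g p).2.2).1, (hbetween _ (g q).2.1 (g q).2.2).1] at hW
            exact irrefl_of WellOrderingRel _ hW
          · exact Subtype.mk_lt_mk.mpr hl'
        have hRf : ERel X (Wrap.un (f y.1)) (Wrap.un (f y'.1)) := by
          refine erel_trans j hj (erel_symm (hρ1 _)) ?_
          rw [heq]
          exact hρ1 _
        exact (erel_iff_icc hl.le).mp hRf hEmb2
      -- descending sequence in Y
      have hy01 : π a₁ < π b₁ := Subtype.mk_lt_mk.mpr (mono_rep hab₁ hnR₁)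
      have hstep : ∀ y : ↥T, π a₁ < y → ∃ y' : ↥T, π a₁ < y' ∧ y' < y := by
        intro y hy
        have hlt : (π a₁).1 < y.1 := Subtype.coe_lt_coe.mpr hy
        have hnR' : ¬ ERel X (π a₁).1 y.1 := hTne (ne_of_lt hy)
        obtain ⟨c, hc1, hc2, hc3, hc4⟩ := erel_middle j hj x₀ hlt hnR'
        refine ⟨π c, ?_, ?_⟩
        · exact Subtype.mk_lt_mk.mpr (by
            have := mono_rep hc1 hc3
            rwa [hTfix (π a₁)] at this)
        · exact Subtype.mk_lt_mk.mpr (by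
            have := mono_rep hc2 hc4
            rwa [hTfix y] at this)
      choose nxt hnxt1 hnxt2 using hstep
      set sq : ℕ → {y : ↥T // π a₁ < y} := fun n =>
        Nat.rec ⟨π b₁, hy01⟩ (fun _ p => ⟨nxt p.1 p.2, hnxt1 p.1 p.2⟩) n with hsq
      have hdec : ∀ n, (sq (n + 1)).1 < (sq n).1 := fun n => hnxt2 (sq n).1 (sq n).2
      set ψ : ℕ → X := fun n => ρ (Wrap.un (f ((sq n).1).1)) with hψdef
      have hψ : ∀ n, WellOrderingRel (ψ (n + 1)) (ψ n) := fun n => step _ _ (hdec n)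
      have hwf : WellFounded (WellOrderingRel (α := X)) := IsWellFounded.wf
      have hne : (Set.range ψ).Nonempty := ⟨ψ 0, ⟨0, rfl⟩⟩
      obtain ⟨n, hn⟩ := hwf.min_mem (Set.range ψ) hne
      exact hwf.not_lt_min (Set.range ψ) (x := ψ (n + 1)) ⟨n + 1, rfl⟩ (by rw [← hn]; exact hψ n)
    · exact hY'
  -- homogeneity
  have hhom : Homogeneous ↥T := by
    intro y₁ y₂ hy12
    have hlt : y₁.1 < y₂.1 := Subtype.coe_lt_coe.mpr hy12
    have hnR : ¬ ERel X y₁.1 y₂.1 := hTne (ne_of_lt hy12)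
    have hE : Embeds X ↥(Set.Icc y₁.1 y₂.1) := by
      by_contra hc
      exact hnR ((erel_iff_icc hlt.le).mpr hc)
    obtain ⟨g, hg⟩ := hE
    refine ⟨fun y => ⟨π ((g y.1).1), ?_, ?_⟩, ?_⟩
    · exact Subtype.coe_le_coe.mp
        (((hTfix y₁).symm.trans_le (ρmono (g y.1).2.1) : y₁.1 ≤ ρ ((g y.1).1)))
    · exact Subtype.coe_le_coe.mp
        (((ρmono (g y.1).2.2).trans_eq (hTfix y₂) : ρ ((g y.1).1) ≤ y₂.1))
    · intro p q hpq
      have hpq' : p.1 < q.1 := Subtype.coe_lt_coe.mpr hpq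
      have hnR' : ¬ ERel X p.1 q.1 := hTne (ne_of_lt hpq)
      have hEpq : Embeds X ↥(Set.Icc p.1 q.1) := by
        by_contra hc
        exact hnR' ((erel_iff_icc hpq'.le).mpr hc)
      have hgs : StrictMono (fun z : X => (g z).1) :=
        fun u v huv => Subtype.coe_lt_coe.mpr (hg huv)
      have hEgg : Embeds X ↥(Set.Icc ((g p.1).1) ((g q.1).1)) := embeds_map hgs hEpq
      have hnR2 : ¬ ERel X ((g p.1).1) ((g q.1).1) :=
        fun h => (erel_iff_icc (hgs hpq').le).mp h hEgg
      exact Subtype.mk_lt_mk.mpr (Subtype.mk_lt_mk.mpr (mono_rep (hgs hpq') hnR2))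
  exact ⟨↥T, inferInstance, ⟨Subtype.val, fun p q h => Subtype.coe_lt_coe.mpr h⟩, hXY, hhom⟩
end

section
/- Let X be an s-untranscendable linear order such that both X + X embeds in X (i.e., X·2 ≼ X) and the product 2X embeds in X. Then the square XX embeds in X. -/
universe u

namespace Stmt13

variable {X : Type u} [LinearOrder X]

/-- A copy of `X` inside the closed interval `[a,b]`. -/
def EmbIn (a b : X) : Prop :=
  ∃ f : X → X, StrictMono f ∧ ∀ x, a ≤ f x ∧ f x ≤ b

theorem embIn_mono {a b a' b' : X} (ha : a ≤ a') (hb : b' ≤ b) (h : EmbIn a' b') :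
    EmbIn a b := by
  obtain ⟨f, hf, hbd⟩ := h
  exact ⟨f, hf, fun x => ⟨ha.trans (hbd x).1, (hbd x).2.trans hb⟩⟩

def Rel (a b : X) : Prop := ¬ EmbIn (min a b) (max a b)

theorem rel_iff {a b : X} (hab : a ≤ b) : Rel a b ↔ ¬ EmbIn a b := by
  unfold Rel
  rw [min_eq_left hab, max_eq_right hab]

theorem rel_symm {a b : X} (h : Rel a b) : Rel b a := by
  unfold Rel at h ⊢
  rwa [min_comm, max_comm]

theorem embIn_of_not_rel {a b : X} (hab : a ≤ b) (h : ¬ Rel a b) : EmbIn a b :=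
  not_not.1 fun hc => h ((rel_iff hab).2 hc)

theorem rel_sub {a b a' b' : X} (h1 : a ≤ a') (h2 : a' ≤ b') (h3 : b' ≤ b)
    (h : Rel a b) : Rel a' b' := by
  rw [rel_iff (h1.trans (h2.trans h3))] at h
  rw [rel_iff h2]
  exact fun he => h (embIn_mono h1 h3 he)

/-- Data extracted from `hplus` (two cross-separated self-embeddings)
together with a nontrivial pair. -/
structure Ctx (X : Type u) [LinearOrder X] : Type u where
  u' : X → X
  v' : X → X
  hu : StrictMono u'
  hv : StrictMono v'
  cross : ∀ x y, u' x < v' y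
  a₀ : X
  b₀ : X
  hab : a₀ < b₀

theorem rel_refl (C : Ctx X) (a : X) : Rel a a := by
  rw [rel_iff le_rfl]
  rintro ⟨f, hf, hbd⟩
  exact absurd (hf C.hab) (not_lt.2 ((hbd C.b₀).2.trans (hbd C.a₀).1))

theorem embIn_split (C : Ctx X) {a b c : X} (hab : a ≤ b) (hbc : b ≤ c) (h : EmbIn a c) :
    EmbIn a b ∨ EmbIn b c := by
  obtain ⟨f, hf, hbd⟩ := h
  by_cases H : ∀ x, f (C.u' x) ≤ b
  · exact Or.inl ⟨fun x => f (C.u' x), hf.comp C.hu, fun x => ⟨(hbd _).1, H x⟩⟩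
  · push_neg at H
    obtain ⟨x₀, hx₀⟩ := H
    refine Or.inr ⟨fun y => f (C.v' y), hf.comp C.hv, fun y => ⟨?_, (hbd _).2⟩⟩
    exact (hx₀.trans (hf (C.cross x₀ y))).le

theorem rel_trans_le (C : Ctx X) {a b c : X} (hac : a ≤ c) (h1 : Rel a b) (h2 : Rel b c) :
    Rel a c := by
  rcases le_total b a with hba | hab
  · exact rel_sub hba hac le_rfl h2
  · rcases le_total b c with hbc | hcb
    · rw [rel_iff hab] at h1
      rw [rel_iff hbc] at h2
      rw [rel_iff hac]
      intro he
      rcases embIn_split C hab hbc he with h | h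
      exacts [h1 h, h2 h]
    · exact rel_sub le_rfl hac hcb h1

theorem rel_trans (C : Ctx X) {a b c : X} (h1 : Rel a b) (h2 : Rel b c) : Rel a c := by
  rcases le_total a c with hac | hca
  · exact rel_trans_le C hac h1 h2
  · exact rel_symm (rel_trans_le C hca (rel_symm h2) (rel_symm h1))

def ctxSetoid (C : Ctx X) : Setoid X :=
  ⟨Rel, ⟨fun a => rel_refl C a, fun {_ _} h => rel_symm h,
    fun {_ _ _} h1 h2 => rel_trans C h1 h2⟩⟩

def qmk (C : Ctx X) (a : X) : Quotient (ctxSetoid C) := Quotient.mk (ctxSetoid C) a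

theorem qmk_eq_of_rel (C : Ctx X) {a b : X} (h : Rel a b) : qmk C a = qmk C b :=
  Quotient.sound (s := ctxSetoid C) h

theorem rel_of_qmk_eq (C : Ctx X) {a b : X} (h : qmk C a = qmk C b) : Rel a b :=
  Quotient.exact (s := ctxSetoid C) h


theorem wd (C : Ctx X) {a b a' b' : X} (ha : Rel a a') (hb : Rel b b')
    (h : Rel a b ∨ a < b) : Rel a' b' ∨ a' < b' := by
  rcases h with h | h
  · exact Or.inl (rel_trans C (rel_trans C (rel_symm ha) h) hb)
  · by_cases hc' : a' < b'
    · exact Or.inr hc'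
    · push_neg at hc'
      left
      rcases lt_or_ge a b' with h1 | h1
      · exact rel_symm (rel_sub h1.le hc' le_rfl ha)
      · rcases le_total a' a with h2 | h2
        · exact rel_symm (rel_sub le_rfl hc' (h2.trans h.le) (rel_symm hb))
        · have key : ¬ EmbIn b' a' := by
            intro he
            rcases embIn_split C h1 h2 he with h3 | h3
            · exact (rel_iff (h1.trans h.le)).1 (rel_symm hb) (embIn_mono le_rfl h.le h3)
            · exact (rel_iff h2).1 ha h3
          exact rel_symm ((rel_iff hc').2 key)

noncomputable def instQ (C : Ctx X) : LinearOrder (Quotient (ctxSetoid C)) where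
  le := Quotient.lift₂ (fun a b => Rel a b ∨ a < b)
    (fun _ _ _ _ ha hb => propext ⟨wd C ha hb, wd C (rel_symm ha) (rel_symm hb)⟩)
  lt q1 q2 := Quotient.lift₂ (fun a b => Rel a b ∨ a < b)
      (fun _ _ _ _ ha hb => propext ⟨wd C ha hb, wd C (rel_symm ha) (rel_symm hb)⟩) q1 q2 ∧
    ¬ Quotient.lift₂ (fun a b => Rel a b ∨ a < b)
      (fun _ _ _ _ ha hb => propext ⟨wd C ha hb, wd C (rel_symm ha) (rel_symm hb)⟩) q2 q1
  le_refl q := Quotient.inductionOn q fun a => Or.inl (rel_refl C a)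
  le_trans q1 q2 q3 := Quotient.inductionOn₃ q1 q2 q3
    fun a b c (h1 : Rel a b ∨ a < b) (h2 : Rel b c ∨ b < c) => by
    show Rel a c ∨ a < c
    rcases h1 with h1 | h1 <;> rcases h2 with h2 | h2
    · exact Or.inl (rel_trans C h1 h2)
    · rcases lt_or_ge a c with h | h
      · exact Or.inr h
      · exact Or.inl (rel_symm (rel_sub h2.le h le_rfl (rel_symm h1)))
    · rcases lt_or_ge a c with h | h
      · exact Or.inr h
      · exact Or.inl (rel_symm (rel_sub le_rfl h h1.le (rel_symm h2)))
    · exact Or.inr (h1.trans h2)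
  le_antisymm q1 q2 := Quotient.inductionOn₂ q1 q2
    fun a b (h1 : Rel a b ∨ a < b) (h2 : Rel b a ∨ b < a) => by
    rcases h1 with h1 | h1
    · exact Quotient.sound (s := ctxSetoid C) h1
    · rcases h2 with h2 | h2
      · exact Quotient.sound (s := ctxSetoid C) (rel_symm h2)
      · exact absurd h2 h1.asymm
  le_total q1 q2 := Quotient.inductionOn₂ q1 q2 fun a b => by
    rcases lt_trichotomy a b with h | h | h
    · exact Or.inl (Or.inr h)
    · exact Or.inl (Or.inl (h ▸ rel_refl C a))
    · exact Or.inr (Or.inr h)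
  toDecidableLE _ _ := Classical.dec _

theorem qlt_iff (C : Ctx X) (a b : X) :
    (instQ C).lt (qmk C a) (qmk C b) ↔ (a < b ∧ ¬ Rel a b) := by
  show ((Rel a b ∨ a < b) ∧ ¬ (Rel b a ∨ b < a)) ↔ _
  constructor
  · rintro ⟨h1, h2⟩
    have hnr : ¬ Rel a b := fun hr => h2 (Or.inl (rel_symm hr))
    rcases h1 with h1 | h1
    · exact absurd h1 hnr
    · exact ⟨h1, hnr⟩
  · rintro ⟨h1, h2⟩
    refine ⟨Or.inr h1, ?_⟩
    rintro (h3 | h3)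
    · exact h2 (rel_symm h3)
    · exact h1.asymm h3


/-- The strict order on the carrier of `X` rearranging the `Rel`-classes along a
well-ordering of the quotient, keeping the original order inside each class. -/
def wlt (C : Ctx X) (a b : X) : Prop :=
  (qmk C a = qmk C b ∧ a < b) ∨ (qmk C a ≠ qmk C b ∧ WellOrderingRel (qmk C a) (qmk C b))

theorem wo_trans (C : Ctx X) {q1 q2 q3 : Quotient (ctxSetoid C)}
    (h1 : WellOrderingRel q1 q2) (h2 : WellOrderingRel q2 q3) : WellOrderingRel q1 q3 :=
  IsTrans.trans _ _ _ h1 h2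

theorem wo_asymm (C : Ctx X) {q1 q2 : Quotient (ctxSetoid C)}
    (h1 : WellOrderingRel q1 q2) : ¬ WellOrderingRel q2 q1 :=
  (IsWellFounded.wf (r := WellOrderingRel)).asymmetric _ _ h1

theorem wlt_sto (C : Ctx X) : IsStrictTotalOrder X (wlt C) where
  trichotomous a b hn1 hn2 := by
    have : wlt C a b ∨ a = b ∨ wlt C b a := by
     by_cases he : qmk C a = qmk C b
     · rcases lt_trichotomy a b with h | h | h
       · exact Or.inl (Or.inl ⟨he, h⟩)
       · exact Or.inr (Or.inl h)
       · exact Or.inr (Or.inr (Or.inl ⟨he.symm, h⟩))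
     · rcases trichotomous_of WellOrderingRel (qmk C a) (qmk C b) with h | h | h
       · exact Or.inl (Or.inr ⟨he, h⟩)
       · exact absurd h he
       · exact Or.inr (Or.inr (Or.inr ⟨Ne.symm he, h⟩))
    rcases this with h | h | h
    exacts [absurd h hn1, h, absurd h hn2]
  irrefl a := by
    rintro (⟨_, h⟩ | ⟨n, _⟩)
    · exact lt_irrefl _ h
    · exact n rfl
  trans a b c h1 h2 := by
    rcases h1 with ⟨e1, l1⟩ | ⟨n1, r1⟩ <;> rcases h2 with ⟨e2, l2⟩ | ⟨n2, r2⟩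
    · exact Or.inl ⟨e1.trans e2, l1.trans l2⟩
    · refine Or.inr ⟨fun h => n2 (e1.symm.trans h), ?_⟩
      rw [e1]; exact r2
    · refine Or.inr ⟨fun h => n1 (h.trans e2.symm), ?_⟩
      rw [← e2]; exact r1
    · by_cases he : qmk C a = qmk C c
      · have h3 := wo_trans C r1 r2
        rw [he] at h3
        exact absurd h3 (wo_asymm C h3)
      · exact Or.inr ⟨he, wo_trans C r1 r2⟩

noncomputable def instW (C : Ctx X) : LinearOrder X :=
  letI := wlt_sto C
  letI : DecidableRel (wlt C) := fun _ _ => Classical.dec _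
  linearOrderOfSTO (wlt C)

theorem wlt_iff (C : Ctx X) (a b : X) : (instW C).lt a b ↔ wlt C a b := Iff.rfl


theorem exists_pair (C : Ctx X) : ∃ u v : X, u < v ∧ ¬ Rel u v := by
  refine ⟨C.u' (C.u' C.a₀), C.v' C.a₀, C.cross _ _, fun hr => ?_⟩
  exact (rel_iff (C.cross _ _).le).1 hr
    ⟨fun y => C.u' (C.v' y), C.hu.comp C.hv,
      fun y => ⟨(C.hu (C.cross C.a₀ y)).le, (C.cross _ C.a₀).le⟩⟩

/-- No copy of `X` fits inside a single `Rel`-class. -/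
theorem noClass (C : Ctx X) (c : X) (f : X → X) (hf : StrictMono f)
    (hr : ∀ x, Rel (f x) c) : False := by
  have hlt : f (C.u' (C.u' C.a₀)) < f (C.v' C.a₀) := hf (C.cross _ _)
  have hemb : EmbIn (f (C.u' (C.u' C.a₀))) (f (C.v' C.a₀)) := by
    refine ⟨fun y => f (C.u' (C.v' y)), hf.comp (C.hu.comp C.hv), fun y => ⟨?_, ?_⟩⟩
    · exact (hf (C.hu (C.cross C.a₀ y))).le
    · exact (hf (C.cross _ C.a₀)).le
  exact (rel_iff hlt.le).1 (rel_trans C (hr _) (rel_symm (hr _))) hemb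

theorem density (C : Ctx X) {u v : X} (huv : u < v) (hnr : ¬ Rel u v) :
    ∃ w, u < w ∧ w < v ∧ ¬ Rel u w ∧ ¬ Rel w v := by
  obtain ⟨f, hf, hbd⟩ := embIn_of_not_rel huv.le hnr
  have h1 : u < f (C.u' (C.v' C.a₀)) :=
    lt_of_le_of_lt (hbd (C.u' (C.u' C.a₀))).1 (hf (C.hu (C.cross C.a₀ C.a₀)))
  have h2 : f (C.u' (C.v' C.a₀)) < v :=
    lt_of_lt_of_le (hf (C.cross (C.v' C.a₀) C.a₀)) (hbd (C.v' C.a₀)).2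
  refine ⟨f (C.u' (C.v' C.a₀)), h1, h2, fun hr => ?_, fun hr => ?_⟩
  · exact (rel_iff h1.le).1 hr
      ⟨fun y => f (C.u' (C.u' y)), hf.comp (C.hu.comp C.hu),
        fun y => ⟨(hbd _).1, (hf (C.hu (C.cross y C.a₀))).le⟩⟩
  · exact (rel_iff h2.le).1 hr
      ⟨fun y => f (C.v' y), hf.comp C.hv,
        fun y => ⟨(hf (C.cross (C.v' C.a₀) y)).le, (hbd _).2⟩⟩

theorem key_step (C : Ctx X) (F : X → X)
    (hF : ∀ {x y : X}, x < y → wlt C (F x) (F y))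
    {a b : X} (hab : a < b) (hnr : ¬ Rel a b) :
    WellOrderingRel (qmk C (F a)) (qmk C (F b)) := by
  rcases hF hab with ⟨he, _⟩ | ⟨_, hr⟩
  · -- the two endpoint values lie in the same class: contradiction
    exfalso
    obtain ⟨f, hfm, hfb⟩ := embIn_of_not_rel hab.le hnr
    have hq : ∀ y, qmk C (F (f y)) = qmk C (F a) := by
      intro y
      rcases eq_or_lt_of_le (hfb y).1 with h1 | h1
      · rw [← h1]
      · rcases eq_or_lt_of_le (hfb y).2 with h2 | h2
        · rw [h2, ← he]
        · by_contra hcon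
          rcases hF h1 with ⟨e1, _⟩ | ⟨_, r1⟩
          · exact hcon e1.symm
          · rcases hF h2 with ⟨e2, _⟩ | ⟨_, r2⟩
            · exact hcon (e2.trans he.symm)
            · rw [← he] at r2
              exact wo_asymm C r1 r2
    have hmono : StrictMono fun y => F (f y) := by
      intro y y' hyy
      rcases hF (hfm hyy) with ⟨_, hlt'⟩ | ⟨hne', _⟩
      · exact hlt'
      · exact absurd ((hq y).trans (hq y').symm) hne'
    exact noClass C (F a) _ hmono fun y => rel_of_qmk_eq C (hq y)
  · exact hr

theorem no_emb_W (C : Ctx X) : ¬ @Embeds X X _ (instW C) := by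
  rintro ⟨F, hF⟩
  have hF' : ∀ {x y : X}, x < y → wlt C (F x) (F y) := fun h => (wlt_iff C _ _).1 (hF h)
  obtain ⟨u0, v0, huv0, hnr0⟩ := exists_pair C
  have step : ∀ p : {z : X // u0 < z ∧ ¬ Rel u0 z},
      ∃ w : {z : X // u0 < z ∧ ¬ Rel u0 z}, w.1 < p.1 ∧ ¬ Rel w.1 p.1 := by
    rintro ⟨z, hz1, hz2⟩
    obtain ⟨w, h1, h2, h3, h4⟩ := density C hz1 hz2
    exact ⟨⟨w, h1, h3⟩, h2, h4⟩
  choose stepf hs1 hs2 using step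
  let seq : ℕ → {z : X // u0 < z ∧ ¬ Rel u0 z} := fun n => stepf^[n] ⟨v0, huv0, hnr0⟩
  have hsucc : ∀ n, seq (n + 1) = stepf (seq n) := fun n =>
    Function.iterate_succ_apply' _ _ _
  have hdesc : ∀ n, WellOrderingRel (qmk C (F (seq (n + 1)).1)) (qmk C (F (seq n).1)) := by
    intro n
    rw [hsucc n]
    exact key_step C F hF' (hs1 (seq n)) (hs2 (seq n))
  have wf : WellFounded (WellOrderingRel (α := Quotient (ctxSetoid C))) := IsWellFounded.wf
  have hne : (Set.range fun n => qmk C (F (seq n).1)).Nonempty := ⟨_, ⟨0, rfl⟩⟩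
  obtain ⟨n₀, hn₀⟩ := wf.min_mem _ hne
  exact wf.not_lt_min (Set.range fun n => qmk C (F (seq n).1)) (x := qmk C (F (seq (n₀ + 1)).1)) ⟨n₀ + 1, rfl⟩
    (show WellOrderingRel _ (wf.min _ hne) by rw [← hn₀]; exact hdesc n₀)


end Stmt13

/- The product `AB` (replace each point of `B` by a copy of `A`) is represented as
`B ×ₗ A`; in particular `2X` is `X ×ₗ Bool` and `X·2 = X + X` is `X ⊕ₗ X`. -/
theorem stmt_13 (X : Type u) [LinearOrder X]
    (hsu : ∀ (A B : Type u) [LinearOrder A] [LinearOrder B],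
      Embeds X (B ×ₗ A) → Embeds X A ∨ Embeds X B)
    (hplus : Embeds (X ⊕ₗ X) X)
    (h2X : Embeds (X ×ₗ Bool) X) :
    Embeds (X ×ₗ X) X := by
  classical
  by_cases hnt : ∃ a b : X, a < b
  · obtain ⟨a₀, b₀, hab⟩ := hnt
    obtain ⟨e2, he2⟩ := hplus
    obtain ⟨g2, hg2⟩ := h2X
    set C : Stmt13.Ctx X :=
      ⟨fun x => e2 (toLex (Sum.inl x)), fun x => e2 (toLex (Sum.inr x)),
        fun x y h => he2 (Sum.Lex.inl_lt_inl_iff.2 h),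
        fun x y h => he2 (Sum.Lex.inr_lt_inr_iff.2 h),
        fun x y => he2 (Sum.Lex.inl_lt_inr x y), a₀, b₀, hab⟩ with hC
    -- embed X into Q ×ₗ (X reordered)
    have hembQ : @Embeds X (Lex ((Quotient (Stmt13.ctxSetoid C)) × X)) _
        (@Prod.Lex.instLinearOrder _ _ (Stmt13.instQ C) (Stmt13.instW C)) := by
      refine ⟨fun x => toLex (Stmt13.qmk C x, x), fun x y hxy => ?_⟩
      by_cases hr : Stmt13.Rel x y
      · have hqe : Stmt13.qmk C x = Stmt13.qmk C y := Stmt13.qmk_eq_of_rel C hr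
        have hw : Stmt13.wlt C x y := Or.inl ⟨hqe, hxy⟩
        have hlex : Prod.Lex ((Stmt13.instQ C).lt) (Stmt13.wlt C)
            (Stmt13.qmk C x, x) (Stmt13.qmk C y, y) := by
          rw [hqe]
          exact Prod.Lex.right _ hw
        exact hlex
      · have hq : (Stmt13.instQ C).lt (Stmt13.qmk C x) (Stmt13.qmk C y) :=
          (Stmt13.qlt_iff C x y).2 ⟨hxy, hr⟩
        have hlex : Prod.Lex ((Stmt13.instQ C).lt) (Stmt13.wlt C)
            (Stmt13.qmk C x, x) (Stmt13.qmk C y, y) := Prod.Lex.left _ _ hq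
        exact hlex
    rcases @hsu X (Quotient (Stmt13.ctxSetoid C)) (Stmt13.instW C) (Stmt13.instQ C) hembQ
      with hA | hB
    · exact absurd hA (Stmt13.no_emb_W C)
    · obtain ⟨h, hh⟩ := hB
      -- reps composed with h: images of distinct points span intervals containing copies of X
      have hconv : ∀ {u v : X}, u < v →
          ((h u).out < (h v).out ∧ ¬ Stmt13.Rel ((h u).out) ((h v).out)) := by
        intro u v huv
        have h1 := hh huv
        rw [← Quotient.out_eq (h u), ← Quotient.out_eq (h v)] at h1
        exact (Stmt13.qlt_iff C _ _).1 h1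
      -- the pairs coming from h2X
      have hg01 : ∀ x : X, g2 (toLex (x, false)) < g2 (toLex (x, true)) := by
        intro x
        apply hg2
        have : Prod.Lex (· < ·) (· < ·) (x, false) (x, true) :=
          Prod.Lex.right _ (by simp)
        exact this
      have hgcross : ∀ {x y : X}, x < y → g2 (toLex (x, true)) < g2 (toLex (y, false)) := by
        intro x y hxy
        apply hg2
        have : Prod.Lex (· < ·) (· < ·) (x, true) (y, false) := Prod.Lex.left _ _ hxy
        exact this
      have hEx : ∀ x : X, ∃ f : X → X, StrictMono f ∧
          ∀ y, (h (g2 (toLex (x, false)))).out ≤ f y ∧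
            f y ≤ (h (g2 (toLex (x, true)))).out := fun x =>
        Stmt13.embIn_of_not_rel (hconv (hg01 x)).1.le (hconv (hg01 x)).2
      choose e he1 he2' using hEx
      refine ⟨fun p => e (ofLex p).1 (ofLex p).2, fun p q hpq => ?_⟩
      have hpq' := (Prod.Lex.lt_iff (x := p) (y := q)).1 hpq
      rcases hpq' with h1 | ⟨h1, h2⟩
      · have c1 : e (ofLex p).1 (ofLex p).2 ≤ (h (g2 (toLex ((ofLex p).1, true)))).out :=
          (he2' _ _).2
        have c2 : (h (g2 (toLex ((ofLex p).1, true)))).out <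
            (h (g2 (toLex ((ofLex q).1, false)))).out := (hconv (hgcross h1)).1
        have c3 : (h (g2 (toLex ((ofLex q).1, false)))).out ≤ e (ofLex q).1 (ofLex q).2 :=
          (he2' _ _).1
        exact c1.trans_lt (c2.trans_le c3)
      · show e (ofLex p).1 (ofLex p).2 < e (ofLex q).1 (ofLex q).2
        rw [h1]
        exact he1 _ h2

  · push_neg at hnt
    refine ⟨fun p => (ofLex p).1, fun p q hpq => ?_⟩
    have hpq' := (Prod.Lex.lt_iff (x := p) (y := q)).1 hpq
    rcases hpq' with h | ⟨_, h⟩ <;> exact absurd h (not_lt.2 (hnt _ _))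
end

section
/- Let X be a linear order that is untranscendable but not indecomposable (i.e., X admits a partition into an initial segment I and final segment J = X \ I such that X embeds in neither I nor J). Then X has exactly two elements. -/
universe u

/- The product `AB` (replace each point of `B` by a copy of `A`) is represented as
`B ×ₗ A`.  Initial segments are lower sets, with the induced order. -/
theorem stmt_14 (X : Type u) [LinearOrder X]
    (hu : ∀ (A B : Type u) [LinearOrder A] [LinearOrder B],
      Embeds A X → Embeds B X → Embeds X (B ×ₗ A) → Embeds X A ∨ Embeds X B)
    (hnd : ∃ I : Set X, IsLowerSet I ∧ ¬ Embeds X ↥I ∧ ¬ Embeds X ↥(Iᶜ)) :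
    Nonempty (X ≃ Fin 2) := by
  classical
  obtain ⟨I, hI, hXI, hXJ⟩ := hnd
  -- I is nonempty
  obtain ⟨i0, hi0⟩ : ∃ i, i ∈ I := by
    by_contra h
    push_neg at h
    exact hXJ ⟨fun x => ⟨x, h x⟩, fun a b hab => Subtype.mk_lt_mk.mpr hab⟩
  -- Iᶜ is nonempty
  obtain ⟨j0, hj0⟩ : ∃ j, j ∈ Iᶜ := by
    by_contra h
    push_neg at h
    refine hXI ⟨fun x => ⟨x, ?_⟩, fun a b hab => Subtype.mk_lt_mk.mpr hab⟩
    by_contra hx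
    exact h x hx
  have hj0' : j0 ∉ I := hj0
  have hij : i0 < j0 := lt_of_not_ge fun h => hj0' (hI h hi0)
  -- the two `Fin 2`-like auxiliary order
  set P : Set X := {i0, j0} with hP
  have hi0P : i0 ∈ P := Set.mem_insert _ _
  have hj0P : j0 ∈ P := Set.mem_insert_of_mem _ rfl
  have hPX : Embeds ↥P X := ⟨Subtype.val, fun a b h => Subtype.coe_lt_coe.mpr h⟩
  -- the orders A = 1 + J and B = I + 1
  set A : Set X := insert i0 Iᶜ with hA
  set B : Set X := insert j0 I with hB
  have hAX : Embeds ↥A X := ⟨Subtype.val, fun a b h => Subtype.coe_lt_coe.mpr h⟩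
  have hBX : Embeds ↥B X := ⟨Subtype.val, fun a b h => Subtype.coe_lt_coe.mpr h⟩
  have hICX : Embeds ↥(Iᶜ) X := ⟨Subtype.val, fun a b h => Subtype.coe_lt_coe.mpr h⟩
  have hIX : Embeds ↥I X := ⟨Subtype.val, fun a b h => Subtype.coe_lt_coe.mpr h⟩
  -- X embeds into B ×ₗ A
  have hmain : Embeds X (↥B ×ₗ ↥A) := by
    refine ⟨fun x => if hx : x ∈ I then toLex (⟨x, Set.mem_insert_of_mem _ hx⟩, ⟨i0, Set.mem_insert _ _⟩)
      else toLex (⟨j0, Set.mem_insert _ _⟩, ⟨x, Set.mem_insert_of_mem _ hx⟩), ?_⟩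
    intro a b hab
    by_cases ha : a ∈ I <;> by_cases hb : b ∈ I <;>
      simp only [ha, hb, dif_pos, dif_neg, not_false_iff, Prod.Lex.lt_iff]
    · exact Or.inl (Subtype.mk_lt_mk.mpr hab)
    · exact Or.inl (Subtype.mk_lt_mk.mpr (lt_of_not_ge fun h => hj0' (hI h ha)))
    · exact absurd (hI hab.le hb) ha
    · exact Or.inr ⟨rfl, Subtype.mk_lt_mk.mpr hab⟩
  -- apply untranscendability
  have hfin : Embeds X ↥P := by
    rcases hu ↥A ↥B hAX hBX hmain with hXA | hXB
    · -- X ≼ 1 + J; then X ≼ P ×ₗ Iᶜ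
      obtain ⟨f, hf⟩ := hXA
      have h2 : Embeds X (↥P ×ₗ ↥(Iᶜ)) := by
        refine ⟨fun x => if hx : (f x : X) ∈ I then toLex (⟨i0, hi0P⟩, ⟨j0, hj0⟩)
          else toLex (⟨j0, hj0P⟩, ⟨(f x : X), hx⟩), ?_⟩
        intro a b hab
        have hfab : (f a : X) < (f b : X) := Subtype.coe_lt_coe.mpr (hf hab)
        by_cases ha : (f a : X) ∈ I <;> by_cases hb : (f b : X) ∈ I <;>
          simp only [ha, hb, dif_pos, dif_neg, not_false_iff, Prod.Lex.lt_iff]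
        · -- both in I: they are both i0, impossible
          exfalso
          have ha' : (f a : X) = i0 := ((f a).2.resolve_right fun h => h ha)
          have hb' : (f b : X) = i0 := ((f b).2.resolve_right fun h => h hb)
          rw [ha', hb'] at hfab
          exact lt_irrefl _ hfab
        · exact Or.inl (Subtype.mk_lt_mk.mpr hij)
        · exact absurd (hI hfab.le hb) ha
        · exact Or.inr ⟨rfl, Subtype.mk_lt_mk.mpr hfab⟩
      rcases hu ↥(Iᶜ) ↥P hICX hPX h2 with h | h
      · exact absurd h hXJ
      · exact h
    · -- X ≼ I + 1; then X ≼ P ×ₗ I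
      obtain ⟨f, hf⟩ := hXB
      have h2 : Embeds X (↥P ×ₗ ↥I) := by
        refine ⟨fun x => if hx : (f x : X) ∈ I then toLex (⟨i0, hi0P⟩, ⟨(f x : X), hx⟩)
          else toLex (⟨j0, hj0P⟩, ⟨i0, hi0⟩), ?_⟩
        intro a b hab
        have hfab : (f a : X) < (f b : X) := Subtype.coe_lt_coe.mpr (hf hab)
        by_cases ha : (f a : X) ∈ I <;> by_cases hb : (f b : X) ∈ I <;>
          simp only [ha, hb, dif_pos, dif_neg, not_false_iff, Prod.Lex.lt_iff]
        · exact Or.inr ⟨rfl, Subtype.mk_lt_mk.mpr hfab⟩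
        · exact Or.inl (Subtype.mk_lt_mk.mpr hij)
        · -- f a = j0, f b ∈ I, f a < f b ⇒ j0 ∈ I, contradiction
          exfalso
          have ha' : (f a : X) = j0 := ((f a).2.resolve_right ha)
          rw [ha'] at hfab
          exact hj0' (hI hfab.le hb)
        · exfalso
          have ha' : (f a : X) = j0 := ((f a).2.resolve_right ha)
          have hb' : (f b : X) = j0 := ((f b).2.resolve_right hb)
          rw [ha', hb'] at hfab
          exact lt_irrefl _ hfab
      rcases hu ↥I ↥P hIX hPX h2 with h | h
      · exact absurd h hXI
      · exact h
  -- conclude: X injects into a two element set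
  obtain ⟨g, hg⟩ := hfin
  have hne : i0 ≠ j0 := ne_of_lt hij
  have : Nontrivial X := ⟨i0, j0, hne⟩
  -- build injection X → Fin 2
  have hinj : Function.Injective (fun x => if (g x : X) = i0 then (0 : Fin 2) else 1) := by
    intro a b hab
    simp only at hab
    by_cases ha : (g a : X) = i0 <;> by_cases hb : (g b : X) = i0
    · exact hg.injective (Subtype.ext (ha.trans hb.symm))
    · simp [ha, hb] at hab
    · simp [ha, hb] at hab
    · have ha' : (g a : X) = j0 := ((g a).2.resolve_left ha)
      have hb' : (g b : X) = j0 := ((g b).2.resolve_left hb)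
      exact hg.injective (Subtype.ext (ha'.trans hb'.symm))
  haveI : Fintype X := Fintype.ofInjective _ hinj
  have hcard : Fintype.card X = 2 := by
    have h1 : Fintype.card X ≤ 2 := by
      simpa using Fintype.card_le_of_injective _ hinj
    have h2 : 1 < Fintype.card X := Fintype.one_lt_card
    omega
  exact ⟨Fintype.equivFinOfCardEq hcard⟩
end

section
/- Let X be an untranscendable linear order and suppose X is equimorphic to a linear order Y in which only finitely many F-classes are finite, where the F-classes of Y are the equivalence classes of the relation y F y' iff the closed interval between y and y' in Y is finite. Then either X is strongly indecomposable (for every subset S ⊆ X, X embeds in S or X embeds in X \ S, with induced orders) or X has exactly two elements. -/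
universe u

/-- The F-class of `y` in a linear order `Y`: the class of `y` under the finite
condensation, i.e. all `z` with finite closed interval between `y` and `z`. -/
def FClass (Y : Type u) [LinearOrder Y] (y : Y) : Set Y :=
  {z : Y | (Set.Icc (min y z) (max y z)).Finite}

section EmbedsAPI

variable {α : Type*} {β : Type*} {γ : Type*} [LinearOrder α] [LinearOrder β] [LinearOrder γ]

theorem embeds_trans (h1 : Embeds α β) (h2 : Embeds β γ) : Embeds α γ := by
  obtain ⟨f, hf⟩ := h1; obtain ⟨g, hg⟩ := h2; exact ⟨g ∘ f, hg.comp hf⟩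

theorem embeds_refl : Embeds α α := ⟨id, fun _ _ h => h⟩

theorem embeds_subtype_val {X : Type u} [LinearOrder X] (S : Set X) : Embeds (↥S) X :=
  ⟨Subtype.val, fun _ _ h => h⟩

theorem embeds_inclusion {X : Type u} [LinearOrder X] {S T : Set X} (h : S ⊆ T) :
    Embeds (↥S) (↥T) :=
  ⟨Set.inclusion h, fun _ _ hlt => hlt⟩

theorem embeds_dual (h : Embeds α β) : Embeds (αᵒᵈ) (βᵒᵈ) := by
  obtain ⟨f, hf⟩ := h
  exact ⟨fun a => OrderDual.toDual (f (OrderDual.ofDual a)), fun a b hab => by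
    simp only [OrderDual.toDual_lt_toDual]
    exact hf hab⟩

/-- from a strict mono map out of the dual into a lex product, get one out of the原 order
into the dual lex product. -/
theorem embeds_undual_lex {ι κ : Type*} [LinearOrder ι] [LinearOrder κ]
    (h : Embeds (αᵒᵈ) (ι ×ₗ κ)) : Embeds α ((ιᵒᵈ) ×ₗ (κᵒᵈ)) := by
  obtain ⟨f, hf⟩ := h
  refine ⟨fun a => toLex (OrderDual.toDual (ofLex (f (OrderDual.toDual a))).1,
      OrderDual.toDual (ofLex (f (OrderDual.toDual a))).2), ?_⟩
  intro a b hab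
  have hba : OrderDual.toDual b < OrderDual.toDual a := by
    simpa only [OrderDual.toDual_lt_toDual] using hab
  have := hf hba
  rw [show f (OrderDual.toDual b) = toLex (ofLex (f (OrderDual.toDual b))) from rfl,
      show f (OrderDual.toDual a) = toLex (ofLex (f (OrderDual.toDual a))) from rfl,
      Prod.Lex.lt_iff] at this
  rw [Prod.Lex.lt_iff]
  rcases this with h1 | ⟨h1, h2⟩
  · left; simpa only [OrderDual.toDual_lt_toDual, ofLex_toLex] using h1
  · right
    exact ⟨by simp only [ofLex_toLex] at h1 ⊢; rw [h1], by simpa only [OrderDual.toDual_lt_toDual, ofLex_toLex] using h2⟩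

theorem embeds_dual_lex {ι κ : Type*} [LinearOrder ι] [LinearOrder κ]
    (h : Embeds α (ι ×ₗ κ)) : Embeds (αᵒᵈ) ((ιᵒᵈ) ×ₗ (κᵒᵈ)) := by
  obtain ⟨f, hf⟩ := h
  refine ⟨fun a => toLex (OrderDual.toDual (ofLex (f (OrderDual.ofDual a))).1,
      OrderDual.toDual (ofLex (f (OrderDual.ofDual a))).2), ?_⟩
  intro a b hab
  have hba : OrderDual.ofDual b < OrderDual.ofDual a := hab
  have := hf hba
  rw [show f (OrderDual.ofDual b) = toLex (ofLex (f (OrderDual.ofDual b))) from rfl,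
      show f (OrderDual.ofDual a) = toLex (ofLex (f (OrderDual.ofDual a))) from rfl,
      Prod.Lex.lt_iff] at this
  rw [Prod.Lex.lt_iff]
  rcases this with h1 | ⟨h1, h2⟩
  · left; simpa only [OrderDual.toDual_lt_toDual, ofLex_toLex] using h1
  · right
    exact ⟨by simp only [ofLex_toLex] at h1 ⊢; rw [h1], by simpa only [OrderDual.toDual_lt_toDual, ofLex_toLex] using h2⟩

theorem embeds_of_fintype {X : Type u} [LinearOrder X] [Infinite X]
    (T : Type v) [LinearOrder T] [Fintype T] : Embeds T X := by
  obtain ⟨s, hs⟩ := Infinite.exists_subset_card_eq X (Fintype.card T)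
  have e1 : T ≃o Fin (Fintype.card T) := (monoEquivOfFin T rfl).symm
  have e2 : Fin (Fintype.card T) ≃o ↥s := s.orderIsoOfFin hs
  exact ⟨fun t => (e2 (e1 t)).val, fun a b hab => by
    change ((e2 (e1 a)) : X) < ((e2 (e1 b)) : X)
    rw [Subtype.coe_lt_coe]
    exact e2.strictMono (e1.strictMono hab)⟩

theorem embeds_false_of_fin {X : Type u} [LinearOrder X] [Infinite X]
    {T : Type v} [LinearOrder T] [Finite T] (h : Embeds X T) : False := by
  obtain ⟨f, hf⟩ := h
  exact (Finite.of_injective f hf.injective).false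

end EmbedsAPI

section FrelAPI

variable {α : Type*} [LinearOrder α]

/-- finite-interval relation -/
def Frel (a b : α) : Prop := (Set.Icc (min a b) (max a b)).Finite

theorem mem_fclass {Y : Type u} [LinearOrder Y] {a b : Y} : b ∈ FClass Y a ↔ Frel a b := Iff.rfl

theorem frel_refl (a : α) : Frel a a := by
  simp [Frel, min_self, max_self, Set.Icc_self]

theorem frel_symm {a b : α} (h : Frel a b) : Frel b a := by
  rwa [Frel, min_comm, max_comm]

theorem frel_of_le {a b : α} (hab : a ≤ b) : Frel a b ↔ (Set.Icc a b).Finite := by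
  rw [Frel, min_eq_left hab, max_eq_right hab]

theorem frel_trans {a b c : α} (h1 : Frel a b) (h2 : Frel b c) : Frel a c := by
  have hsub : Set.Icc (min a c) (max a c) ⊆ Set.Icc (min a b) (max a b) ∪
      Set.Icc (min b c) (max b c) := by
    intro x hx
    obtain ⟨hx1, hx2⟩ := hx
    rcases le_total a c with hac | hca
    · have hax : a ≤ x := le_trans (le_of_eq (min_eq_left hac).symm) hx1
      have hxc : x ≤ c := le_trans hx2 (le_of_eq (max_eq_right hac))
      rcases le_total x b with hxb | hbx
      · exact Or.inl ⟨le_trans (min_le_left a b) hax, le_trans hxb (le_max_right a b)⟩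
      · exact Or.inr ⟨le_trans (min_le_left b c) hbx, le_trans hxc (le_max_right b c)⟩
    · have hcx : c ≤ x := le_trans (le_of_eq (min_eq_right hca).symm) hx1
      have hxa : x ≤ a := le_trans hx2 (le_of_eq (max_eq_left hca))
      rcases le_total x b with hxb | hbx
      · exact Or.inr ⟨le_trans (min_le_right b c) hcx, le_trans hxb (le_max_left b c)⟩
      · exact Or.inl ⟨le_trans (min_le_right a b) hbx, le_trans hxa (le_max_left a b)⟩
  exact Set.Finite.subset (Set.Finite.union h1 h2) hsub

theorem fclass_eq {Y : Type u} [LinearOrder Y] {a b : Y} (h : Frel a b) :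
    FClass Y a = FClass Y b := by
  ext z
  constructor
  · intro hz; exact frel_trans (frel_symm h) hz
  · intro hz; exact frel_trans h hz

/-- crossing lemma: anything related to `d` stays below `d'` when `d < d'` are unrelated. -/
theorem frel_lt_right {d d' c : α} (hdd' : d < d') (hn : ¬ Frel d d') (hc : Frel d c) :
    c < d' := by
  by_contra hcon
  push_neg at hcon
  apply hn
  have hdc : d ≤ c := le_trans hdd'.le hcon
  have h1 : (Set.Icc d c).Finite := (frel_of_le hdc).mp hc
  rw [frel_of_le hdd'.le]
  exact h1.subset (Set.Icc_subset_Icc_right hcon)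

theorem frel_lt_left {d d' c : α} (hdd' : d < d') (hn : ¬ Frel d d') (hc : Frel d' c) :
    d < c := by
  by_contra hcon
  push_neg at hcon
  apply hn
  have hcd' : c ≤ d' := le_trans hcon hdd'.le
  have h1 : (Set.Icc c d').Finite := by
    have := frel_symm hc
    rwa [frel_of_le hcd'] at this
  rw [frel_of_le hdd'.le]
  exact h1.subset (Set.Icc_subset_Icc_left hcon)

/-- elements of the class of `d` lie wholly below elements of the class of `d'`. -/
theorem class_lt_class {d d' c c' : α} (hdd' : d < d') (hn : ¬ Frel d d')
    (hc : Frel d c) (hc' : Frel d' c') : c < c' := by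
  have h1 : c < d' := frel_lt_right hdd' hn hc
  have h2 : d < c' := frel_lt_left hdd' hn hc'
  by_contra hcon
  push_neg at hcon   -- c' ≤ c
  -- then d < c' ≤ c, so Frel d c', then Frel d d' via c' and class of d'
  have hdc' : Frel d c' := by
    have hdc : d ≤ c := le_trans h2.le hcon
    have h3 : (Set.Icc d c).Finite := (frel_of_le hdc).mp hc
    rw [frel_of_le h2.le]
    exact h3.subset (Set.Icc_subset_Icc_right hcon)
  exact hn (frel_trans hdc' (frel_symm hc'))

/-- successor within a class, when the class has no maximum. -/
theorem exists_succ {d : α} (hnm : ¬ ∃ m, Frel d m ∧ ∀ c, Frel d c → c ≤ m) :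
    ∃ c, Frel d c ∧ d < c ∧ ∀ e, Frel d e → d < e → c ≤ e := by
  push_neg at hnm
  obtain ⟨c0, hc0, hdc0⟩ := hnm d (frel_refl d)
  have hT : {c | Frel d c ∧ d < c ∧ c ≤ c0}.Finite := by
    have : (Set.Icc d c0).Finite := (frel_of_le hdc0.le).mp hc0
    exact this.subset (fun x hx => ⟨hx.2.1.le, hx.2.2⟩)
  obtain ⟨c, hcT, hcmin⟩ := Set.exists_min_image _ id hT ⟨c0, hc0, hdc0, le_refl _⟩
  refine ⟨c, hcT.1, hcT.2.1, ?_⟩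
  intro e he hde
  rcases le_total e c0 with h | h
  · exact hcmin e ⟨he, hde, h⟩
  · exact le_trans hcT.2.2 h

/-- predecessor within a class, when the class has a maximum (hence, being infinite, no min). -/
theorem exists_pred {Y : Type u} [LinearOrder Y] {d : Y} (hinf : (FClass Y d).Infinite)
    (hm : ∃ m, Frel d m ∧ ∀ c, Frel d c → c ≤ m) :
    ∃ c, Frel d c ∧ c < d ∧ ∀ e, Frel d e → e < d → e ≤ c := by
  obtain ⟨M, hM, hMmax⟩ := hm
  have hdM : d ≤ M := hMmax d (frel_refl d)
  have hbelow : ∃ c0, Frel d c0 ∧ c0 < d := by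
    by_contra hcon
    push_neg at hcon
    apply hinf
    have hsub : FClass Y d ⊆ Set.Icc d M := by
      intro z hz
      have hz' : Frel d z := hz
      exact ⟨hcon z hz', hMmax z hz'⟩
    exact Set.Finite.subset ((frel_of_le hdM).mp hM) hsub
  obtain ⟨c0, hc0, hc0d⟩ := hbelow
  have hT : {c | Frel d c ∧ c0 ≤ c ∧ c < d}.Finite := by
    have : (Set.Icc c0 d).Finite := by
      have := frel_symm hc0
      rwa [frel_of_le hc0d.le] at this
    exact this.subset (fun x hx => ⟨hx.2.1, hx.2.2.le⟩)
  obtain ⟨c, hcT, hcmax⟩ := Set.exists_max_image _ id hT ⟨c0, hc0, le_refl _, hc0d⟩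
  refine ⟨c, hcT.1, hcT.2.2, ?_⟩
  intro e he hed
  rcases le_total c0 e with h | h
  · exact hcmax e ⟨he, h, hed⟩
  · exact le_trans h hcT.2.1


end FrelAPI
section CoreConstr

open Classical in
/-- Core cut-collapse construction. `C` plays the role of the part kept pointwise
(e.g. `Sᶜ`); its complement is the collapsed side. -/
theorem core_construction (Z : Type u) [LinearOrder Z] (C : Set Z) (a0 : Z) (ha0 : a0 ∉ C) :
    ∃ (I : Type u) (_ : LinearOrder I) (W : Set Z),
      (∀ w ∈ W, w ∉ C) ∧
      (∀ w ∈ W, ∀ b ∈ C, b < w → ∃ b' ∈ C, b < b' ∧ b' < w) ∧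
      (∀ w ∈ W, ∀ w' ∈ W, w < w' → ∃ b ∈ C, w < b ∧ b < w') ∧
      Embeds Z (I ×ₗ ↥(Cᶜ)) ∧ Embeds I Z ∧
      Embeds I ((↥(C ∪ W)) ×ₗ (ULift.{u} (Fin 2))) := by
  classical
  set J : Z → Set Z := fun z => {b | b ∈ C ∧ b ≤ z} with hJdef
  set tg : Z → Bool := fun z => if z ∈ C then false else true with htgdef
  set q : Z → Set Z × Bool := fun z => (J z, tg z) with hqdef
  set σ0 : Set Z × Bool → Z := fun p => if h : ∃ w, q w = p then h.choose else a0 with hσ0def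
  set σ : Z → Z := fun z => σ0 (q z) with hσdef
  have hqσ : ∀ z, q (σ z) = q z := by
    intro z
    have h : ∃ w, q w = q z := ⟨z, rfl⟩
    simp only [hσdef, hσ0def, dif_pos h]
    exact h.choose_spec
  have hJσ : ∀ z, J (σ z) = J z := fun z => congrArg Prod.fst (hqσ z)
  have hTσ : ∀ z, tg (σ z) = tg z := fun z => congrArg Prod.snd (hqσ z)
  have hσq : ∀ {z z' : Z}, q z = q z' → σ z = σ z' := by
    intro z z' h
    simp only [hσdef, h]
  have hσσ : ∀ z, σ (σ z) = σ z := fun z => hσq (hqσ z)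
  have htg_false : ∀ z : Z, tg z = false ↔ z ∈ C := by
    intro z; by_cases h : z ∈ C <;> simp [htgdef, h]
  have htg_true : ∀ z : Z, tg z = true ↔ z ∉ C := by
    intro z; by_cases h : z ∈ C <;> simp [htgdef, h]
  have hJC : ∀ z, J z ⊆ C := fun z b hb => hb.1
  have hJmono : ∀ {z z' : Z}, z ≤ z' → J z ⊆ J z' := by
    intro z z' h b hb; exact ⟨hb.1, le_trans hb.2 h⟩
  have hself : ∀ {z : Z}, z ∈ C → z ∈ J z := fun h => ⟨h, le_refl _⟩
  -- the index order: set of representatives with the induced order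
  set R : Set Z := Set.range σ with hRdef
  have hmemR : ∀ z, σ z ∈ R := fun z => Set.mem_range_self z
  have hfix : ∀ z ∈ R, σ z = z := by
    rintro z ⟨w, rfl⟩; exact hσσ w
  -- key characterization of comparisons between representatives
  have char_of_lt : ∀ z ∈ R, ∀ z' ∈ R, z < z' →
      (J z ⊂ J z' ∨ (J z = J z' ∧ tg z < tg z')) := by
    intro z hz z' hz' hlt
    have hsub : J z ⊆ J z' := hJmono hlt.le
    by_cases heq : J z = J z'
    · right
      refine ⟨heq, ?_⟩
      have hqne : q z ≠ q z' := by
        intro h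
        have : z = z' := by
          rw [← hfix z hz, ← hfix z' hz']
          exact hσq h
        exact absurd hlt (this ▸ lt_irrefl _)
      have htgne : tg z ≠ tg z' := by
        intro h
        exact hqne (by rw [hqdef]; exact Prod.ext heq h)
      rw [Bool.lt_iff]
      rcases Bool.eq_false_or_eq_true (tg z) with hb | hb
      · -- tg z = true : impossible
        exfalso
        have hb' : tg z' = false := by
          rcases Bool.eq_false_or_eq_true (tg z') with h' | h'
          · exact absurd (hb.trans h'.symm) htgne
          · exact h'
        have hz'C : z' ∈ C := (htg_false z').mp hb'
        have hmem : z' ∈ J z := heq ▸ hself hz'C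
        exact absurd hlt (not_lt_of_ge hmem.2)
      · rcases Bool.eq_false_or_eq_true (tg z') with hb' | hb'
        · exact ⟨hb, hb'⟩
        · exact absurd (hb.trans hb'.symm) htgne
    · left
      exact Set.ssubset_iff_subset_ne.mpr ⟨hsub, heq⟩
  have lt_of_char : ∀ (z z' : Z),
      (J z ⊂ J z' ∨ (J z = J z' ∧ tg z < tg z')) → z < z' := by
    intro z z' h
    rcases h with hss | ⟨heq, htg⟩
    · obtain ⟨b, hb1, hb2⟩ := Set.exists_of_ssubset hss
      have h1 : z < b := by
        by_contra hcon
        push_neg at hcon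
        exact hb2 ⟨hb1.1, hcon⟩
      exact lt_of_lt_of_le h1 hb1.2
    · rw [Bool.lt_iff] at htg
      have hzC : z ∈ C := (htg_false z).mp htg.1
      have hz'C : z' ∉ C := (htg_true z').mp htg.2
      have hmem : z ∈ J z' := heq ▸ hself hzC
      exact lt_of_le_of_ne hmem.2 (fun h => hz'C (h ▸ hzC))
  have hσ_mono : Monotone σ := by
    intro z z' hzz'
    by_contra hcon
    push_neg at hcon
    rcases char_of_lt _ (hmemR z') _ (hmemR z) hcon with hss | ⟨heq, htg⟩
    · rw [hJσ, hJσ] at hss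
      exact hss.2 (hJmono hzz')
    · rw [hJσ, hJσ] at heq
      rw [hTσ, hTσ, Bool.lt_iff] at htg
      have hz'C : z' ∈ C := (htg_false z').mp htg.1
      have hzC : z ∉ C := (htg_true z).mp htg.2
      have hmem : z' ∈ J z := heq ▸ hself hz'C
      have : z = z' := le_antisymm hzz' hmem.2
      exact hzC (this ▸ hz'C)
  have hembZ : Embeds Z (↥R ×ₗ ↥(Cᶜ)) := by
    refine ⟨fun z => toLex (⟨σ z, hmemR z⟩, if h : z ∈ C then ⟨a0, ha0⟩ else ⟨z, h⟩), ?_⟩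
    intro z z' hzz'
    rw [Prod.Lex.lt_iff]
    rcases lt_or_eq_of_le (hσ_mono hzz'.le) with hlt | heq
    · exact Or.inl (Subtype.mk_lt_mk.mpr hlt)
    · right
      refine ⟨Subtype.ext heq, ?_⟩
      have hq : q z = q z' := by
        have h1 := hqσ z
        have h2 := hqσ z'
        rw [heq] at h1
        rw [← h1, h2]
      have hJeq : J z = J z' := congrArg Prod.fst hq
      have hTeq : tg z = tg z' := congrArg Prod.snd hq
      by_cases hzC : z ∈ C
      · exfalso
        have hz'C : z' ∈ C := by
          have h1 : tg z = false := (htg_false z).mpr hzC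
          exact (htg_false z').mp (hTeq ▸ h1)
        have hmem : z' ∈ J z := hJeq.symm ▸ hself hz'C
        exact absurd hzz' (not_lt_of_ge hmem.2)
      · have hz'C : z' ∉ C := by
          have h1 : tg z = true := (htg_true z).mpr hzC
          exact (htg_true z').mp (hTeq ▸ h1)
        dsimp only
        rw [dif_neg hzC, dif_neg hz'C]
        exact Subtype.mk_lt_mk.mpr hzz'
  have hembIZ : Embeds (↥R) Z := ⟨Subtype.val, fun _ _ h => h⟩
  -- Step B data
  set hasMax : Set Z → Prop := fun Js => ∃ b ∈ Js, ∀ b' ∈ Js, b' ≤ b with hMdef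
  set wit : Set Z → Z := fun Js => if h : ∃ z, z ∉ C ∧ J z = Js then h.choose else a0
    with hwitdef
  have hwit : ∀ (Js : Set Z), (∃ z, z ∉ C ∧ J z = Js) → wit Js ∉ C ∧ J (wit Js) = Js := by
    intro Js h
    simp only [hwitdef, dif_pos h]
    exact h.choose_spec
  set LC : Set (Set Z) := {Js | (∃ z, z ∉ C ∧ J z = Js) ∧ ¬ hasMax Js} with hLCdef
  set W : Set Z := wit '' LC with hWdef
  have hW1 : ∀ w ∈ W, w ∉ C := by
    rintro w ⟨Js, hJs, rfl⟩; exact (hwit Js hJs.1).1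
  have hW2 : ∀ w ∈ W, ∀ b ∈ C, b < w → ∃ b' ∈ C, b < b' ∧ b' < w := by
    rintro w ⟨Js, hJs, rfl⟩ b hbC hbw
    have hJw : J (wit Js) = Js := (hwit Js hJs.1).2
    have hbJ : b ∈ Js := by
      rw [← hJw]; exact ⟨hbC, hbw.le⟩
    have hnm : ¬ ∃ b ∈ Js, ∀ b' ∈ Js, b' ≤ b := hJs.2
    push_neg at hnm
    obtain ⟨b', hb'J, hb'b⟩ := hnm b hbJ
    have hb'w : b' ∈ J (wit Js) := by rw [hJw]; exact hb'J
    exact ⟨b', hb'w.1, hb'b,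
      lt_of_le_of_ne hb'w.2 (fun h => (hwit Js hJs.1).1 (h ▸ hb'w.1))⟩
  have hW3 : ∀ w ∈ W, ∀ w' ∈ W, w < w' → ∃ b ∈ C, w < b ∧ b < w' := by
    rintro w ⟨Js, hJs, rfl⟩ w' ⟨Js', hJs', rfl⟩ hww'
    have hJw : J (wit Js) = Js := (hwit Js hJs.1).2
    have hJw' : J (wit Js') = Js' := (hwit Js' hJs'.1).2
    have hne : Js ≠ Js' := by
      intro h
      rw [h] at hww'
      exact lt_irrefl _ hww'
    have hsub : Js ⊆ Js' := by
      rw [← hJw, ← hJw']; exact hJmono hww'.le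
    obtain ⟨b, hb1, hb2⟩ := Set.exists_of_ssubset (Set.ssubset_iff_subset_ne.mpr ⟨hsub, hne⟩)
    have hbJ' : b ∈ J (wit Js') := by rw [hJw']; exact hb1
    have hbw : wit Js < b := by
      by_contra hcon
      push_neg at hcon
      apply hb2
      rw [← hJw]
      exact ⟨hbJ'.1, hcon⟩
    exact ⟨b, hbJ'.1, hbw,
      lt_of_le_of_ne hbJ'.2 (fun h => (hwit Js' hJs'.1).1 (h ▸ hbJ'.1))⟩
  -- the final embedding of the index order into (C ∪ W) × 2
  have hembIV : Embeds (↥R) ((↥(C ∪ W)) ×ₗ (ULift.{u} (Fin 2))) := by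
    have hLCi : ∀ z : Z, tg z = true → ¬ hasMax (J z) → J z ∈ LC := by
      intro z h1 h2
      exact ⟨⟨z, (htg_true z).mp h1, rfl⟩, h2⟩
    set anch : Z → Z := fun z =>
      if tg z = true then (if h : hasMax (J z) then h.choose else wit (J z)) else z
      with hanchdef
    have hanchJ : ∀ z : Z, J (anch z) = J z := by
      intro z
      simp only [hanchdef]
      by_cases h1 : tg z = true
      · rw [if_pos h1]
        by_cases h2 : hasMax (J z)
        · rw [dif_pos h2]
          obtain ⟨hm1, hm2⟩ := h2.choose_spec
          apply Set.Subset.antisymm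
          · intro b hb
            exact ⟨hb.1, le_trans hb.2 hm1.2⟩
          · intro b hb
            exact ⟨hb.1, hm2 b hb⟩
        · rw [dif_neg h2]
          exact (hwit (J z) (hLCi z h1 h2).1).2
      · rw [if_neg h1]
    have hanchMem : ∀ z : Z, anch z ∈ C ∪ W := by
      intro z
      simp only [hanchdef]
      by_cases h1 : tg z = true
      · rw [if_pos h1]
        by_cases h2 : hasMax (J z)
        · rw [dif_pos h2]
          exact Or.inl h2.choose_spec.1.1
        · rw [dif_neg h2]
          exact Or.inr ⟨J z, hLCi z h1 h2, rfl⟩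
      · rw [if_neg h1]
        left
        rcases Bool.eq_false_or_eq_true (tg z) with hb | hb
        · exact absurd hb h1
        · exact (htg_false z).mp hb
    refine ⟨fun i => toLex (⟨anch i.val, hanchMem i.val⟩,
      if tg i.val = true ∧ hasMax (J i.val) then ⟨1⟩ else ⟨0⟩), ?_⟩
    intro i i' hii'
    rw [Prod.Lex.lt_iff]
    rcases char_of_lt _ i.2 _ i'.2 hii' with hss | ⟨heq, htg⟩
    · -- strictly smaller cut ⇒ strictly smaller anchor
      left
      rw [Subtype.mk_lt_mk]
      obtain ⟨b, hb1, hb2⟩ := Set.exists_of_ssubset hss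
      have hbJ' : b ∈ J (anch i'.val) := by rw [hanchJ]; exact hb1
      have h1 : anch i.val < b := by
        by_contra hcon
        push_neg at hcon
        apply hb2
        rw [← hanchJ i.val]
        exact ⟨hb1.1, hcon⟩
      exact lt_of_lt_of_le h1 hbJ'.2
    · -- same cut, tags false < true
      rw [Bool.lt_iff] at htg
      have hiC : (i.val : Z) ∈ C := (htg_false _).mp htg.1
      have hanchi : anch i.val = i.val := by
        simp only [hanchdef]
        rw [if_neg (by rw [htg.1]; exact Bool.false_ne_true)]
      have hmax : hasMax (J i.val) := by
        refine ⟨i.val, hself hiC, ?_⟩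
        intro b hb
        exact hb.2
      have hmax' : hasMax (J i'.val) := by rw [← heq]; exact hmax
      have hanchi' : anch i'.val = hmax'.choose := by
        simp only [hanchdef]
        rw [if_pos htg.2, dif_pos hmax']
      have heqa : anch i.val = anch i'.val := by
        rw [hanchi, hanchi']
        obtain ⟨hm1, hm2⟩ := hmax'.choose_spec
        have h1 : hmax'.choose ≤ i.val := by
          have hc : hmax'.choose ∈ J i.val := by rw [heq]; exact hm1
          exact hc.2
        have h2 : (i.val : Z) ≤ hmax'.choose := by
          apply hm2
          rw [← heq]
          exact hself hiC
        exact le_antisymm h2 h1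
      right
      refine ⟨Subtype.ext heqa, ?_⟩
      dsimp only
      rw [if_neg (fun h => by rw [htg.1] at h; exact Bool.false_ne_true h.1),
        if_pos ⟨htg.2, hmax'⟩]
      exact ULift.up_lt.mpr (by decide)
  exact ⟨↥R, inferInstance, W, hW1, hW2, hW3, hembZ, hembIZ, hembIV⟩

end CoreConstr
section Reroute

/-- Re-routing an embedding whose range lies in `Sc ∪ W2` (with `W2` a set of two-sided
limit points of `Sc`, separated by `Sc`) to an embedding into `Sc`, provided the source
has all F-classes infinite. -/
theorem reroute {D : Type u} {Xt : Type v} [LinearOrder D] [LinearOrder Xt]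
    (Sc W2 : Set Xt)
    (hcls : ∀ d : D, (FClass D d).Infinite)
    (h : D → Xt) (hmono : StrictMono h) (hrange : ∀ d, h d ∈ Sc ∪ W2)
    (P1 : ∀ w ∈ W2, ∀ b ∈ Sc, b < w → ∃ b' ∈ Sc, b < b' ∧ b' < w)
    (P2 : ∀ w ∈ W2, ∀ b ∈ Sc, w < b → ∃ b' ∈ Sc, w < b' ∧ b' < b)
    (P3 : ∀ w ∈ W2, ∀ w' ∈ W2, w < w' → ∃ b ∈ Sc, w < b ∧ b < w') :
    ∃ r : D → Xt, StrictMono r ∧ ∀ d, r d ∈ Sc := by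
  classical
  have gapUp : ∀ d d' : D, h d ∈ W2 → d < d' → ∃ b ∈ Sc, h d < b ∧ b < h d' := by
    intro d d' hw hdd'
    rcases hrange d' with hd' | hd'
    · exact P2 _ hw _ hd' (hmono hdd')
    · exact P3 _ hw _ hd' (hmono hdd')
  have gapDn : ∀ d d' : D, h d' ∈ W2 → d < d' → ∃ b ∈ Sc, h d < b ∧ b < h d' := by
    intro d d' hw hdd'
    rcases hrange d with hd | hd
    · exact P1 _ hw _ hd (hmono hdd')
    · exact P3 _ hd _ hw (hmono hdd')
  set hasM : D → Prop := fun d => ∃ m, Frel d m ∧ ∀ c, Frel d c → c ≤ m with hMdef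
  set nxt : D → D := fun d => if hn : hasM d then d else (exists_succ hn).choose with hnxtdef
  set prv : D → D := fun d => if hn : hasM d then (exists_pred (hcls d) hn).choose else d
    with hprvdef
  have hnxt : ∀ d, ¬ hasM d →
      Frel d (nxt d) ∧ d < nxt d ∧ ∀ e, Frel d e → d < e → nxt d ≤ e := by
    intro d hn
    simp only [hnxtdef, dif_neg hn]
    exact (exists_succ hn).choose_spec
  have hprv : ∀ d, hasM d →
      Frel d (prv d) ∧ prv d < d ∧ ∀ e, Frel d e → e < d → e ≤ prv d := by
    intro d hn
    simp only [hprvdef, dif_pos hn]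
    exact (exists_pred (hcls d) hn).choose_spec
  have hWmem : ∀ d, h d ∉ Sc → h d ∈ W2 := fun d hd => (hrange d).resolve_left hd
  have hup : ∀ d, ¬ hasM d → h d ∉ Sc → ∃ b, b ∈ Sc ∧ h d < b ∧ b < h (nxt d) := by
    intro d hn hb
    obtain ⟨b, hb1, hb2, hb3⟩ := gapUp d (nxt d) (hWmem d hb) (hnxt d hn).2.1
    exact ⟨b, hb1, hb2, hb3⟩
  have hdn : ∀ d, hasM d → h d ∉ Sc → ∃ b, b ∈ Sc ∧ h (prv d) < b ∧ b < h d := by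
    intro d hn hb
    obtain ⟨b, hb1, hb2, hb3⟩ := gapDn (prv d) d (hWmem d hb) (hprv d hn).2.1
    exact ⟨b, hb1, hb2, hb3⟩
  set r : D → Xt := fun d =>
    if hb : h d ∈ Sc then h d
    else if hn : hasM d then (hdn d hn hb).choose else (hup d hn hb).choose with hrdef
  have hrSc : ∀ d, r d ∈ Sc := by
    intro d
    simp only [hrdef]
    by_cases hb : h d ∈ Sc
    · rw [dif_pos hb]; exact hb
    · rw [dif_neg hb]
      by_cases hn : hasM d
      · rw [dif_pos hn]; exact (hdn d hn hb).choose_spec.1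
      · rw [dif_neg hn]; exact (hup d hn hb).choose_spec.1
  have invUp : ∀ d, ¬ hasM d → h d ≤ r d ∧ r d < h (nxt d) := by
    intro d hn
    simp only [hrdef]
    by_cases hb : h d ∈ Sc
    · rw [dif_pos hb]
      exact ⟨le_refl _, hmono (hnxt d hn).2.1⟩
    · rw [dif_neg hb, dif_neg hn]
      exact ⟨((hup d hn hb).choose_spec.2.1).le, (hup d hn hb).choose_spec.2.2⟩
  have invDn : ∀ d, hasM d → h (prv d) < r d ∧ r d ≤ h d := by
    intro d hn
    simp only [hrdef]
    by_cases hb : h d ∈ Sc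
    · rw [dif_pos hb]
      exact ⟨hmono (hprv d hn).2.1, le_refl _⟩
    · rw [dif_neg hb, dif_pos hn]
      exact ⟨(hdn d hn hb).choose_spec.2.1, ((hdn d hn hb).choose_spec.2.2).le⟩
  refine ⟨r, ?_, hrSc⟩
  intro d d' hdd'
  by_cases hsame : Frel d d'
  · by_cases hn : hasM d
    · have hn' : hasM d' := by
        obtain ⟨m, hm1, hm2⟩ := hn
        exact ⟨m, frel_trans (frel_symm hsame) hm1,
          fun c hc => hm2 c (frel_trans hsame hc)⟩
      have h1 : d ≤ prv d' := (hprv d' hn').2.2 d (frel_symm hsame) hdd'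
      calc r d ≤ h d := (invDn d hn).2
        _ ≤ h (prv d') := hmono.monotone h1
        _ < r d' := (invDn d' hn').1
    · have hn' : ¬ hasM d' := by
        intro hcon
        apply hn
        obtain ⟨m, hm1, hm2⟩ := hcon
        exact ⟨m, frel_trans hsame hm1, fun c hc => hm2 c (frel_trans (frel_symm hsame) hc)⟩
      have h1 : nxt d ≤ d' := (hnxt d hn).2.2 d' hsame hdd'
      calc r d < h (nxt d) := (invUp d hn).2
        _ ≤ h d' := hmono.monotone h1
        _ ≤ r d' := (invUp d' hn').1
  · set c1 : D := if hasM d then d else nxt d with hc1def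
    set c2 : D := if hasM d' then prv d' else d' with hc2def
    have hc1 : Frel d c1 ∧ r d ≤ h c1 := by
      simp only [hc1def]
      by_cases hn : hasM d
      · rw [if_pos hn]; exact ⟨frel_refl d, (invDn d hn).2⟩
      · rw [if_neg hn]; exact ⟨(hnxt d hn).1, ((invUp d hn).2).le⟩
    have hc2 : Frel d' c2 ∧ h c2 ≤ r d' := by
      simp only [hc2def]
      by_cases hn : hasM d'
      · rw [if_pos hn]; exact ⟨(hprv d' hn).1, ((invDn d' hn).1).le⟩
      · rw [if_neg hn]; exact ⟨frel_refl d', (invUp d' hn).1⟩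
    have hcc : c1 < c2 := class_lt_class hdd' hsame hc1.1 hc2.1
    calc r d ≤ h c1 := hc1.2
      _ < h c2 := hmono hcc
      _ ≤ r d' := hc2.2

end Reroute

section ClassTransfer

theorem frel_subtype {α : Type u} [LinearOrder α] (T : Set α) {a b : ↥T}
    (h : Frel a.val b.val) : Frel a b := by
  have hvmono : Monotone (Subtype.val : ↥T → α) := fun _ _ hh => hh
  have hsub : Set.Icc (min a b) (max a b) ⊆
      (Subtype.val : ↥T → α) ⁻¹' (Set.Icc (min a.val b.val) (max a.val b.val)) := by
    intro x hx
    constructor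
    · rw [← hvmono.map_min]
      exact hvmono hx.1
    · rw [← hvmono.map_max]
      exact hvmono hx.2
  exact (h.preimage (Subtype.val_injective.injOn)).subset hsub

open Classical in
theorem step0 {X Y : Type u} [LinearOrder X] [LinearOrder Y] [Infinite X]
    (hu : ∀ (A B : Type u) [LinearOrder A] [LinearOrder B],
      Embeds A X → Embeds B X → Embeds X (B ×ₗ A) → Embeds X A ∨ Embeds X B)
    (hXY : Embeds X Y) (hYX : Embeds Y X)
    (hF : {C : Set Y | (∃ y : Y, C = FClass Y y) ∧ C.Finite}.Finite) :
    ∃ (D : Type u) (_ : LinearOrder D), Embeds X D ∧ Embeds D X ∧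
      ∀ d : D, (FClass D d).Infinite := by
  classical
  set K : Set Y := ⋃₀ {C : Set Y | (∃ y : Y, C = FClass Y y) ∧ C.Finite} with hKdef
  have hKfin : K.Finite := Set.Finite.sUnion hF (fun C hC => hC.2)
  have hclsY : ∀ v : Y, v ∉ K → (FClass Y v).Infinite := by
    intro v hv
    by_contra hcon
    rw [Set.not_infinite] at hcon
    apply hv
    rw [hKdef]
    exact Set.mem_sUnion.mpr ⟨FClass Y v, ⟨⟨v, rfl⟩, hcon⟩, mem_fclass.mpr (frel_refl v)⟩
  have hclsK : ∀ v : Y, v ∉ K → ∀ z ∈ FClass Y v, z ∉ K := by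
    intro v hv z hz hzK
    rw [hKdef] at hzK
    obtain ⟨Cz, ⟨⟨y, rfl⟩, hfin⟩, hzy⟩ := hzK
    have h1 : FClass Y y = FClass Y z := fclass_eq (mem_fclass.mp hzy)
    have h2 : FClass Y v = FClass Y z := fclass_eq (mem_fclass.mp hz)
    have h3 := hclsY v hv
    rw [h2, ← h1] at h3
    exact h3 hfin
  have hKcne : Kᶜ.Nonempty := by
    by_contra hcon
    rw [Set.not_nonempty_iff_eq_empty, Set.compl_empty_iff] at hcon
    have : (Set.univ : Set Y).Finite := hcon ▸ hKfin
    haveI : Finite Y := Set.finite_univ_iff.mp this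
    exact embeds_false_of_fin hXY
  obtain ⟨v0, hv0⟩ := hKcne
  set cnt : Y → ℕ := fun y => (hKfin.toFinset.filter (fun p => p < y)).card with hcntdef
  have hcnt_mono : ∀ {y y' : Y}, y ≤ y' → cnt y ≤ cnt y' := by
    intro y y' h
    apply Finset.card_le_card
    intro p hp
    rw [Finset.mem_filter] at hp ⊢
    exact ⟨hp.1, lt_of_lt_of_le hp.2 h⟩
  have hcnt_strict : ∀ {y y' : Y}, y ∈ K → y < y' → cnt y < cnt y' := by
    intro y y' hy h
    apply Finset.card_lt_card
    have hsub : hKfin.toFinset.filter (fun p => p < y) ⊆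
        hKfin.toFinset.filter (fun p => p < y') := by
      intro p hp
      rw [Finset.mem_filter] at hp ⊢
      exact ⟨hp.1, lt_trans hp.2 h⟩
    rw [Finset.ssubset_iff_of_subset hsub]
    refine ⟨y, ?_, ?_⟩
    · rw [Finset.mem_filter]
      exact ⟨hKfin.mem_toFinset.mpr hy, h⟩
    · rw [Finset.mem_filter]
      rintro ⟨-, hcon⟩
      exact lt_irrefl _ hcon
  set k : ℕ := hKfin.toFinset.card with hkdef
  have hcnt_le : ∀ y, cnt y ≤ k := fun y => Finset.card_le_card (Finset.filter_subset _ _)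
  have hbound : ∀ y : Y, (if y ∈ K then 2 * cnt y + 1 else 2 * cnt y) < 2*k+2 := by
    intro y
    have := hcnt_le y
    by_cases h : y ∈ K <;> simp [h] <;> omega
  have hembY : Embeds Y ((ULift.{u} (Fin (2*k+2))) ×ₗ ↥(Kᶜ)) := by
    refine ⟨fun y => toLex (⟨⟨_, hbound y⟩⟩, if h : y ∈ K then ⟨v0, hv0⟩ else ⟨y, h⟩), ?_⟩
    intro y y' hyy'
    rw [Prod.Lex.lt_iff]
    dsimp only [ofLex_toLex]
    by_cases hy : y ∈ K <;> by_cases hy' : y' ∈ K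
    · left
      rw [ULift.up_lt, Fin.mk_lt_mk]
      have := hcnt_strict hy hyy'
      simp only [if_pos hy, if_pos hy']
      omega
    · left
      rw [ULift.up_lt, Fin.mk_lt_mk]
      have := hcnt_strict hy hyy'
      simp only [if_pos hy, if_neg hy']
      omega
    · left
      rw [ULift.up_lt, Fin.mk_lt_mk]
      have := hcnt_mono hyy'.le
      simp only [if_neg hy, if_pos hy']
      omega
    · have hle := hcnt_mono hyy'.le
      rcases lt_or_eq_of_le hle with hlt | heq
      · left
        rw [ULift.up_lt, Fin.mk_lt_mk]
        simp only [if_neg hy, if_neg hy']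
        omega
      · right
        constructor
        · apply congrArg ULift.up
          apply Fin.ext
          simp only [if_neg hy, if_neg hy', heq]
        · rw [dif_neg hy, dif_neg hy']
          exact Subtype.mk_lt_mk.mpr hyy'
  have hclsD : ∀ d : ↥(Kᶜ), (FClass (↥(Kᶜ)) d).Infinite := by
    intro d
    have h1 : (FClass Y d.val).Infinite := hclsY d.val d.2
    have h2 : FClass Y d.val ⊆ Set.range (Subtype.val : ↥(Kᶜ) → Y) := by
      rw [Subtype.range_coe]
      intro z hz
      exact hclsK d.val d.2 z hz
    have h3 := h1.preimage h2
    apply h3.mono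
    intro e he
    exact mem_fclass.mpr (frel_subtype _ (mem_fclass.mp he))
  have eYprod : Embeds X ((ULift.{u} (Fin (2*k+2))) ×ₗ ↥(Kᶜ)) := embeds_trans hXY hembY
  have eKX : Embeds (↥(Kᶜ)) X := embeds_trans (embeds_subtype_val Kᶜ) hYX
  rcases hu (↥(Kᶜ)) (ULift.{u} (Fin (2*k+2))) eKX (embeds_of_fintype _) eYprod with h | h
  · exact ⟨↥(Kᶜ), inferInstance, h, eKX, hclsD⟩
  · exact absurd h (fun hh => embeds_false_of_fin hh)

end ClassTransfer
/- The product `AB` (replace each point of `B` by a copy of `A`) is represented as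
`B ×ₗ A`. -/
theorem stmt_16 (X : Type u) [LinearOrder X]
    (hu : ∀ (A B : Type u) [LinearOrder A] [LinearOrder B],
      Embeds A X → Embeds B X → Embeds X (B ×ₗ A) → Embeds X A ∨ Embeds X B)
    (Y : Type u) [LinearOrder Y] (hXY : Embeds X Y) (hYX : Embeds Y X)
    (hF : {C : Set Y | (∃ y : Y, C = FClass Y y) ∧ C.Finite}.Finite) :
    (∀ S : Set X, Embeds X ↥S ∨ Embeds X ↥(Sᶜ)) ∨ Nonempty (X ≃ Fin 2) := by
  classical
  rcases finite_or_infinite X with hfin | hinf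
  · -- finite case
    haveI := hfin
    letI : Fintype X := Fintype.ofFinite X
    rcases lt_trichotomy (Fintype.card X) 2 with h2 | h2 | h2
    · left
      intro S
      have hc : Fintype.card X = 0 ∨ Fintype.card X = 1 := by omega
      rcases hc with h | h
      · haveI : IsEmpty X := Fintype.card_eq_zero_iff.mp h
        exact Or.inl ⟨fun x => isEmptyElim x, fun a _ _ => isEmptyElim a⟩
      · haveI : Subsingleton X := Fintype.card_le_one_iff_subsingleton.mp (le_of_eq h)
        have hne : Nonempty X := Fintype.card_pos_iff.mp (by omega)
        obtain ⟨x0⟩ := hne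
        by_cases hx : x0 ∈ S
        · exact Or.inl ⟨fun _ => ⟨x0, hx⟩, fun a b hab =>
            absurd (Subsingleton.elim a b) (ne_of_lt hab)⟩
        · exact Or.inr ⟨fun _ => ⟨x0, hx⟩, fun a b hab =>
            absurd (Subsingleton.elim a b) (ne_of_lt hab)⟩
    · right
      exact ⟨Fintype.equivFinOfCardEq h2⟩
    · -- |X| ≥ 3 : untranscendability fails
      exfalso
      haveI hne : Nonempty X := Fintype.card_pos_iff.mp (by omega)
      obtain ⟨m, hm⟩ := Finite.exists_max (id : X → X)
      simp only [id] at hm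
      obtain ⟨x0, hx0⟩ : ∃ x0 : X, x0 < m := by
        obtain ⟨b, hb⟩ := Fintype.exists_ne_of_one_lt_card (by omega) m
        exact ⟨b, lt_of_le_of_ne (hm b) hb⟩
      have eA : Embeds (↥(Set.Iio m)) X := embeds_subtype_val _
      have eB : Embeds (ULift.{u} (Fin 2)) X := by
        refine ⟨fun a => if a.down = 0 then x0 else m, ?_⟩
        intro a b hab
        obtain ⟨ad⟩ := a
        obtain ⟨bd⟩ := b
        have h1 : ad < bd := hab
        have had : ad = 0 := by
          apply Fin.ext
          have := bd.2
          have := h1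
          omega
        have hbd : bd ≠ 0 := by
          intro hc
          rw [hc] at h1
          exact absurd h1 (by simp)
        simp only [had, hbd, if_pos rfl, if_neg hbd]
        exact hx0
      have eprod : Embeds X ((ULift.{u} (Fin 2)) ×ₗ ↥(Set.Iio m)) := by
        refine ⟨fun x => if hx : x < m then toLex (⟨0⟩, ⟨x, hx⟩) else toLex (⟨1⟩, ⟨x0, hx0⟩), ?_⟩
        intro x x' hxx'
        dsimp only
        by_cases h1 : x < m <;> by_cases hh2 : x' < m
        · rw [dif_pos h1, dif_pos hh2, Prod.Lex.lt_iff]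
          right
          exact ⟨rfl, Subtype.mk_lt_mk.mpr hxx'⟩
        · rw [dif_pos h1, dif_neg hh2, Prod.Lex.lt_iff]
          left
          exact ULift.up_lt.mpr (by decide)
        · exact absurd (lt_of_lt_of_le hxx' (hm x')) h1
        · have hx : x = m := le_antisymm (hm x) (not_lt.mp h1)
          have hx' : x' = m := le_antisymm (hm x') (not_lt.mp hh2)
          rw [hx, hx'] at hxx'
          exact absurd hxx' (lt_irrefl m)
      rcases hu (↥(Set.Iio m)) (ULift.{u} (Fin 2)) eA eB eprod with h | h
      · obtain ⟨f, hf⟩ := h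
        have hginj : Function.Injective (fun x => (f x).val) :=
          fun a b hab => hf.injective (Subtype.ext hab)
        have hsurj := (Finite.injective_iff_surjective).mp hginj
        obtain ⟨x, hx⟩ := hsurj m
        dsimp only at hx
        have := (f x).2
        rw [hx] at this
        exact absurd this (lt_irrefl m)
      · obtain ⟨f, hf⟩ := h
        have hcard := Fintype.card_le_of_injective f hf.injective
        simp only [Fintype.card_ulift, Fintype.card_fin] at hcard
        omega
  · -- infinite case
    haveI := hinf
    left
    obtain ⟨D, instD, eXD, eDX, hclsD⟩ := step0 hu hXY hYX hF
    intro S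
    by_cases hSne : S.Nonempty
    swap
    · right
      rw [Set.not_nonempty_iff_eq_empty] at hSne
      refine ⟨fun x => ⟨x, ?_⟩, fun a b hab => Subtype.mk_lt_mk.mpr hab⟩
      rw [hSne, Set.compl_empty]
      trivial
    by_cases hScne : Sᶜ.Nonempty
    swap
    · left
      rw [Set.not_nonempty_iff_eq_empty, Set.compl_empty_iff] at hScne
      refine ⟨fun x => ⟨x, ?_⟩, fun a b hab => Subtype.mk_lt_mk.mpr hab⟩
      rw [hScne]
      trivial
    obtain ⟨a0, ha0⟩ := hSne
    have ha0c : a0 ∉ Sᶜ := by simp [ha0]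
    -- ROUND 1
    obtain ⟨I1, inst1, W1, hW1S, hW1nm, hW1sep, eZ1, eI1Z, eI1V⟩ :=
      core_construction X Sᶜ a0 ha0c
    rw [compl_compl] at eZ1
    rcases hu (↥S) I1 (embeds_subtype_val S) eI1Z eZ1 with hXS | hXI1
    · exact Or.inl hXS
    rcases hu (ULift.{u} (Fin 2)) (↥(Sᶜ ∪ W1)) (embeds_of_fintype _)
        (embeds_subtype_val _) (embeds_trans hXI1 eI1V) with hf2 | hXV1
    · exact absurd hf2 (fun hh => embeds_false_of_fin hh)
    by_cases hW1e : W1.Nonempty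
    swap
    · right
      rw [Set.not_nonempty_iff_eq_empty] at hW1e
      rw [hW1e, Set.union_empty] at hXV1
      exact hXV1
    obtain ⟨w0, hw0⟩ := hW1e
    -- ROUND 2, on the dual of V1 := Sᶜ ∪ W1
    set C2 : Set ((↥(Sᶜ ∪ W1))ᵒᵈ) := {v | (OrderDual.ofDual v).val ∈ Sᶜ} with hC2def
    have ha02 : (OrderDual.toDual (⟨w0, Or.inr hw0⟩ : ↥(Sᶜ ∪ W1))) ∉ C2 := by
      simp only [hC2def, Set.mem_setOf_eq, OrderDual.ofDual_toDual]
      exact hW1S w0 hw0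
    obtain ⟨I2, inst2, W2', hW2C, hW2nm, hW2sep, eZ2, eI2Z2, eI2V2⟩ :=
      core_construction ((↥(Sᶜ ∪ W1))ᵒᵈ) C2 _ ha02
    have eXZ2 : Embeds (Xᵒᵈ) ((↥(Sᶜ ∪ W1))ᵒᵈ) := embeds_dual hXV1
    have e4 : Embeds X ((I2ᵒᵈ) ×ₗ ((↥(C2ᶜ))ᵒᵈ)) :=
      embeds_undual_lex (embeds_trans eXZ2 eZ2)
    have eAX : Embeds ((↥(C2ᶜ))ᵒᵈ) X := by
      refine ⟨fun v =>
        ((OrderDual.ofDual ((OrderDual.ofDual v).val)) : ↥(Sᶜ ∪ W1)).val, ?_⟩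
      intro a b hab
      exact hab
    have eBX : Embeds (I2ᵒᵈ) X := by
      have h1 : Embeds (I2ᵒᵈ) (((↥(Sᶜ ∪ W1))ᵒᵈ)ᵒᵈ) := embeds_dual eI2Z2
      refine embeds_trans h1 ⟨fun v =>
        ((OrderDual.ofDual (OrderDual.ofDual v)) : ↥(Sᶜ ∪ W1)).val, ?_⟩
      intro a b hab
      exact hab
    rcases hu ((↥(C2ᶜ))ᵒᵈ) (I2ᵒᵈ) eAX eBX e4 with hXA | hXB
    · -- X embeds into (a subset of) S
      left
      refine embeds_trans hXA ⟨fun v =>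
        ⟨((OrderDual.ofDual ((OrderDual.ofDual v).val)) : ↥(Sᶜ ∪ W1)).val, ?_⟩, ?_⟩
      · have hmem := (OrderDual.ofDual v).2
        have hnot : ((OrderDual.ofDual ((OrderDual.ofDual v).val)) : ↥(Sᶜ ∪ W1)).val ∉ Sᶜ := by
          intro hc
          exact hmem hc
        exact Set.notMem_compl_iff.mp hnot
      · intro a b hab
        exact Subtype.mk_lt_mk.mpr hab
    have e5 : Embeds X (((↥(C2 ∪ W2'))ᵒᵈ) ×ₗ ((ULift.{u} (Fin 2))ᵒᵈ)) :=
      embeds_trans hXB (embeds_dual_lex eI2V2)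
    have eB2X : Embeds ((↥(C2 ∪ W2'))ᵒᵈ) X := by
      refine ⟨fun v =>
        ((OrderDual.ofDual ((OrderDual.ofDual v).val)) : ↥(Sᶜ ∪ W1)).val, ?_⟩
      intro a b hab
      exact hab
    rcases hu ((ULift.{u} (Fin 2))ᵒᵈ) ((↥(C2 ∪ W2'))ᵒᵈ) (embeds_of_fintype _) eB2X e5
      with hf2 | hXV2
    · exact absurd hf2 (fun hh => embeds_false_of_fin hh)
    -- Assemble the final data in X
    set W2 : Set X := (fun v : (↥(Sᶜ ∪ W1))ᵒᵈ =>
      ((OrderDual.ofDual v) : ↥(Sᶜ ∪ W1)).val) '' W2' with hW2def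
    have hW2sub : ∀ x ∈ W2, x ∈ W1 := by
      rintro x ⟨v, hv, rfl⟩
      have h1 := hW2C v hv
      have h2 := ((OrderDual.ofDual v) : ↥(Sᶜ ∪ W1)).2
      rcases h2 with h2 | h2
      · exact absurd h2 h1
      · exact h2
    have hXU : Embeds X (↥(Sᶜ ∪ W2)) := by
      refine embeds_trans hXV2 ⟨fun v =>
        ⟨((OrderDual.ofDual ((OrderDual.ofDual v).val)) : ↥(Sᶜ ∪ W1)).val, ?_⟩, ?_⟩
      · have hmem := (OrderDual.ofDual v).2
        rcases hmem with hm | hm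
        · left
          exact hm
        · right
          exact ⟨(OrderDual.ofDual v).val, hm, rfl⟩
      · intro a b hab
        exact Subtype.mk_lt_mk.mpr hab
    have PR1 : ∀ w ∈ W2, ∀ b ∈ Sᶜ, b < w → ∃ b' ∈ Sᶜ, b < b' ∧ b' < w := by
      intro w hw
      exact hW1nm w (hW2sub w hw)
    have PR2 : ∀ w ∈ W2, ∀ b ∈ Sᶜ, w < b → ∃ b' ∈ Sᶜ, w < b' ∧ b' < b := by
      rintro w ⟨v, hv, rfl⟩ b hbS hwb
      have hbvC : (OrderDual.toDual (⟨b, Or.inl hbS⟩ : ↥(Sᶜ ∪ W1))) ∈ C2 := by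
        simp only [hC2def, Set.mem_setOf_eq, OrderDual.ofDual_toDual]
        exact hbS
      have hlt : (OrderDual.toDual (⟨b, Or.inl hbS⟩ : ↥(Sᶜ ∪ W1))) < v := hwb
      obtain ⟨b', hb'C, hb'1, hb'2⟩ := hW2nm v hv _ hbvC hlt
      exact ⟨((OrderDual.ofDual b') : ↥(Sᶜ ∪ W1)).val, hb'C, hb'2, hb'1⟩
    have PR3 : ∀ w ∈ W2, ∀ w' ∈ W2, w < w' → ∃ b ∈ Sᶜ, w < b ∧ b < w' := by
      rintro w ⟨v, hv, rfl⟩ w' ⟨v', hv', rfl⟩ hww'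
      have hlt : v' < v := hww'
      obtain ⟨b, hbC, hb1, hb2⟩ := hW2sep v' hv' v hv hlt
      exact ⟨((OrderDual.ofDual b) : ↥(Sᶜ ∪ W1)).val, hbC, hb2, hb1⟩
    obtain ⟨fU, hfU⟩ := hXU
    obtain ⟨fD, hfD⟩ := eDX
    obtain ⟨r, hrmono, hrS⟩ := reroute Sᶜ W2 hclsD (fun d => (fU (fD d)).val)
      (fun a b hab => hfU (hfD hab)) (fun d => (fU (fD d)).2) PR1 PR2 PR3
    right
    obtain ⟨fX, hfX⟩ := eXD
    exact ⟨fun x => ⟨r (fX x), hrS _⟩, fun a b hab => Subtype.mk_lt_mk.mpr (hrmono (hfX hab))⟩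
end

section
/- Let X be a linear order such that the product 2X (each point of X replaced by two points) embeds in X. Then every dense suborder Y ⊆ X is equimorphic to X; in particular X embeds in Y. -/
universe u

/- The product `2X` (each point of `X` replaced by two points) is represented as
`X ×ₗ Bool`; a dense suborder carries the induced order. -/
theorem stmt_18 (X : Type u) [LinearOrder X]
    (h2 : Embeds (X ×ₗ Bool) X)
    (Y : Set X) (hY : ∀ x x' : X, x < x' → ∃ y ∈ Y, x ≤ y ∧ y ≤ x') :
    Embeds ↥Y X ∧ Embeds X ↥Y := by
  constructor
  · exact ⟨fun y => (y : X), fun a b h => h⟩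
  · obtain ⟨f, hf⟩ := h2
    have hlt : ∀ x : X, f (toLex (x, false)) < f (toLex (x, true)) := by
      intro x
      apply hf
      exact Prod.Lex.right x (by decide)
    choose g hgY hg1 hg2 using fun x => hY _ _ (hlt x)
    refine ⟨fun x => ⟨g x, hgY x⟩, fun a b hab => ?_⟩
    have h1 : f (toLex (a, true)) < f (toLex (b, false)) := hf (Prod.Lex.left _ _ hab)
    exact Subtype.mk_lt_mk.mpr (lt_of_le_of_lt (hg2 a) (lt_of_lt_of_le h1 (hg1 b)))
end

section
/- The real line ℝ (with its usual order) is strongly indecomposable if and only if there is no Bernstein set: (for every subset S ⊆ ℝ, ℝ order-embeds into S or into ℝ \ S) if and only if (there is no set A ⊆ ℝ such that both A and ℝ \ A intersect every nonempty perfect subset of ℝ). -/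
open Set Filter Topology MeasureTheory


lemma not_countable_cantorSpace : ¬ Countable (ℕ → Bool) := by
  intro h
  have e : (ℕ → Bool) ≃ Set ℕ :=
    Equiv.arrowCongr (Equiv.refl ℕ) Equiv.propEquivBool.symm
  have : Countable (Set ℕ) := Countable.of_equiv _ e
  obtain ⟨f, hf⟩ := exists_injective_nat (Set ℕ)
  exact Function.cantor_injective f hf

lemma perfect_not_countable {P : Set ℝ} (hP : Perfect P) (hne : P.Nonempty) :
    ¬ P.Countable := by
  obtain ⟨f, hrange, -, hinj⟩ := hP.exists_nat_bool_injection hne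
  intro hc
  have h1 : (range f).Countable := hc.mono hrange
  have h2 : Countable ↥(range f) := h1.to_subtype
  have : Countable (ℕ → Bool) := Countable.of_equiv _ (Equiv.ofInjective f hinj).symm
  exact not_countable_cantorSpace this

lemma countable_right_gaps (P : Set ℝ) :
    {p | p ∈ P ∧ ∃ q ∈ P, p < q ∧ Ioo p q ∩ P = ∅}.Countable := by
  classical
  set GR := {p | p ∈ P ∧ ∃ q ∈ P, p < q ∧ Ioo p q ∩ P = ∅} with hGR
  have key : ∀ p ∈ GR, ∃ r : ℚ, ∃ q : ℝ, q ∈ P ∧ p < (r : ℝ) ∧ (r : ℝ) < q ∧ Ioo p q ∩ P = ∅ := by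
    rintro p ⟨-, q, hqP, hpq, hempty⟩
    obtain ⟨r, hr1, hr2⟩ := exists_rat_btwn hpq
    exact ⟨r, q, hqP, hr1, hr2, hempty⟩
  choose! r q hqP hr1 hr2 hempty using key
  have hinj : InjOn r GR := by
    intro p1 h1 p2 h2 hr
    by_contra hne
    rcases lt_or_gt_of_ne hne with hlt | hlt
    · have hq1 : q p1 ≤ p2 := by
        by_contra hgt
        push_neg at hgt
        have : p2 ∈ Ioo p1 (q p1) ∩ P := ⟨⟨hlt, hgt⟩, h2.1⟩
        rw [hempty p1 h1] at this
        exact this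
      have : (r p1 : ℝ) < (r p2 : ℝ) :=
        lt_trans (lt_of_lt_of_le (hr2 p1 h1) hq1) (hr1 p2 h2)
      rw [hr] at this; exact lt_irrefl _ this
    · have hq1 : q p2 ≤ p1 := by
        by_contra hgt
        push_neg at hgt
        have : p1 ∈ Ioo p2 (q p2) ∩ P := ⟨⟨hlt, hgt⟩, h1.1⟩
        rw [hempty p2 h2] at this
        exact this
      have : (r p2 : ℝ) < (r p1 : ℝ) :=
        lt_trans (lt_of_lt_of_le (hr2 p2 h2) hq1) (hr1 p1 h1)
      rw [hr] at this; exact lt_irrefl _ this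
  exact Set.countable_iff_exists_injOn.mpr
    ⟨fun p => Encodable.encode (r p), fun a ha b hb h =>
      hinj ha hb (Encodable.encode_injective h)⟩

lemma countable_left_gaps (P : Set ℝ) :
    {p | p ∈ P ∧ ∃ q ∈ P, q < p ∧ Ioo q p ∩ P = ∅}.Countable := by
  classical
  set Gl := {p | p ∈ P ∧ ∃ q ∈ P, q < p ∧ Ioo q p ∩ P = ∅} with hGl
  have key : ∀ p ∈ Gl, ∃ r : ℚ, ∃ q : ℝ, q ∈ P ∧ q < (r : ℝ) ∧ (r : ℝ) < p ∧ Ioo q p ∩ P = ∅ := by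
    rintro p ⟨-, q, hqP, hpq, hempty⟩
    obtain ⟨r, hr1, hr2⟩ := exists_rat_btwn hpq
    exact ⟨r, q, hqP, hr1, hr2, hempty⟩
  choose! r q hqP hr1 hr2 hempty using key
  have hinj : InjOn r Gl := by
    intro p1 h1 p2 h2 hr
    by_contra hne
    rcases lt_or_gt_of_ne hne with hlt | hlt
    · have hq1 : p1 ≤ q p2 := by
        by_contra hgt
        push_neg at hgt
        have : p1 ∈ Ioo (q p2) p2 ∩ P := ⟨⟨hgt, hlt⟩, h1.1⟩
        rw [hempty p2 h2] at this
        exact this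
      have : (r p1 : ℝ) < (r p2 : ℝ) :=
        lt_trans (lt_of_lt_of_le (hr2 p1 h1) hq1) (hr1 p2 h2)
      rw [hr] at this; exact lt_irrefl _ this
    · have hq1 : p2 ≤ q p1 := by
        by_contra hgt
        push_neg at hgt
        have : p2 ∈ Ioo (q p1) p1 ∩ P := ⟨⟨hgt, hlt⟩, h2.1⟩
        rw [hempty p1 h1] at this
        exact this
      have : (r p2 : ℝ) < (r p1 : ℝ) :=
        lt_trans (lt_of_lt_of_le (hr2 p2 h2) hq1) (hr1 p1 h1)
      rw [hr] at this; exact lt_irrefl _ this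
  exact Set.countable_iff_exists_injOn.mpr
    ⟨fun p => Encodable.encode (r p), fun a ha b hb h =>
      hinj ha hb (Encodable.encode_injective h)⟩

lemma uncountable_inter_Ioo {P : Set ℝ} (hP : Perfect P) {x y : ℝ}
    (hne : (P ∩ Ioo x y).Nonempty) : ¬ (P ∩ Ioo x y).Countable := by
  intro hc
  have hpre : Preperfect (Ioo x y ∩ P) := hP.acc.open_inter isOpen_Ioo
  have hperf : Perfect (closure (Ioo x y ∩ P)) := hpre.perfect_closure
  have hcne : (closure (Ioo x y ∩ P)).Nonempty := by
    rw [inter_comm] at hne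
    exact hne.mono subset_closure
  apply perfect_not_countable hperf hcne
  have hsub : closure (Ioo x y ∩ P) ⊆ (Ioo x y ∩ P) ∪ {x, y} := by
    have h1 : closure (Ioo x y ∩ P) ⊆ Icc x y ∩ P :=
      closure_minimal (inter_subset_inter Ioo_subset_Icc_self (fun _ h => h))
        (isClosed_Icc.inter hP.closed)
    intro z hz
    obtain ⟨hz1, hz2⟩ := h1 hz
    rcases eq_or_lt_of_le hz1.1 with h | h
    · exact Or.inr (Or.inl h.symm)
    rcases eq_or_lt_of_le hz1.2 with h' | h'
    · exact Or.inr (Or.inr h')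
    exact Or.inl ⟨⟨h, h'⟩, hz2⟩
  apply Set.Countable.mono hsub
  have hc' : (Ioo x y ∩ P).Countable := by rwa [inter_comm] at hc
  exact hc'.union ((countable_singleton y).insert x)

lemma exists_strictMono_range_subset {P : Set ℝ} (hP : Perfect P) (hne : P.Nonempty) :
    ∃ f : ℝ → ℝ, StrictMono f ∧ range f ⊆ P := by
  classical
  set G : Set ℝ := {p | p ∈ P ∧ ∃ q ∈ P, p < q ∧ Ioo p q ∩ P = ∅} ∪
      {p | p ∈ P ∧ ∃ q ∈ P, q < p ∧ Ioo q p ∩ P = ∅} with hGdef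
  have hGc : G.Countable := (countable_right_gaps P).union (countable_left_gaps P)
  set D : Set ℝ := P \ G with hDdef
  have hDunc : ¬ D.Countable := by
    intro h
    exact perfect_not_countable hP hne ((h.union hGc).mono (fun z hz => by
      by_cases hzG : z ∈ G
      · exact Or.inr hzG
      · exact Or.inl ⟨hz, hzG⟩))
  have hDnt : D.Nontrivial := by
    by_contra h
    rw [Set.not_nontrivial_iff] at h
    exact hDunc h.countable
  haveI : Nontrivial ↥D := Set.nontrivial_coe_sort.mpr hDnt
  haveI : DenselyOrdered ↥D := by
    constructor
    rintro ⟨a, haP, haG⟩ ⟨b, hbP, hbG⟩ hab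
    have hab' : a < b := hab
    have h1 : (P ∩ Ioo a b).Nonempty := by
      by_contra h
      rw [Set.not_nonempty_iff_eq_empty] at h
      exact haG (Or.inl ⟨haP, b, hbP, hab', by rw [inter_comm]; exact h⟩)
    have h2 := uncountable_inter_Ioo hP h1
    have h3 : ((P ∩ Ioo a b) \ G).Nonempty := by
      by_contra h
      rw [Set.not_nonempty_iff_eq_empty, diff_eq_empty] at h
      exact h2 (hGc.mono h)
    obtain ⟨z, ⟨hzP, hzI⟩, hzG⟩ := h3
    exact ⟨⟨z, hzP, hzG⟩, hzI.1, hzI.2⟩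
  obtain ⟨e⟩ := Order.embedding_from_countable_to_dense ℚ ↥D
  set q : ℚ → ℝ := fun r => (e r : ℝ) with hqdef
  have hq : StrictMono q := fun a b h => by
    exact_mod_cast e.strictMono h
  have hqP : ∀ r, q r ∈ P := fun r => (e r).2.1
  have hSne : ∀ x : ℝ, (q '' {r : ℚ | (r : ℝ) < x}).Nonempty := by
    intro x
    obtain ⟨r, hr⟩ := exists_rat_lt x
    exact ⟨q r, ⟨r, hr, rfl⟩⟩
  have hSbdd : ∀ x : ℝ, BddAbove (q '' {r : ℚ | (r : ℝ) < x}) := by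
    intro x
    obtain ⟨r0, hr0⟩ := exists_rat_gt x
    refine ⟨q r0, ?_⟩
    rintro - ⟨r, hr, rfl⟩
    exact le_of_lt (hq (by exact_mod_cast lt_trans hr hr0))
  refine ⟨fun x => sSup (q '' {r : ℚ | (r : ℝ) < x}), ?_, ?_⟩
  · intro x y hxy
    obtain ⟨r1, hr1x, hr1y⟩ := exists_rat_btwn hxy
    obtain ⟨r2, hr21, hr2y⟩ := exists_rat_btwn hr1y
    have step1 : sSup (q '' {r : ℚ | (r : ℝ) < x}) ≤ q r1 := by
      apply csSup_le (hSne x)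
      rintro - ⟨r, hr, rfl⟩
      exact le_of_lt (hq (by exact_mod_cast lt_trans hr hr1x))
    have step2 : q r1 < q r2 := hq (by exact_mod_cast hr21)
    have step3 : q r2 ≤ sSup (q '' {r : ℚ | (r : ℝ) < y}) :=
      le_csSup (hSbdd y) ⟨r2, hr2y, rfl⟩
    exact lt_of_le_of_lt step1 (lt_of_lt_of_le step2 step3)
  · rintro - ⟨x, rfl⟩
    have h1 : sSup (q '' {r : ℚ | (r : ℝ) < x}) ∈ closure (q '' {r : ℚ | (r : ℝ) < x}) :=
      csSup_mem_closure (hSne x) (hSbdd x)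
    have h2 : closure (q '' {r : ℚ | (r : ℝ) < x}) ⊆ P :=
      closure_minimal (by rintro - ⟨r, -, rfl⟩; exact hqP r) hP.closed
    exact h2 h1

lemma perfect_subset_of_strictMono {f : ℝ → ℝ} (hf : StrictMono f) :
    ∃ P : Set ℝ, Perfect P ∧ P.Nonempty ∧ P ⊆ range f := by
  have hN : {x | ¬ContinuousAt f x}.Countable := hf.monotone.countable_not_continuousAt
  set s : Set ℝ := Icc (0 : ℝ) 1 \ {x | ¬ContinuousAt f x} with hsdef
  have hsm : MeasurableSet s := measurableSet_Icc.diff hN.measurableSet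
  have hμs : volume s = 1 := by
    rw [hsdef, measure_diff_null (hN.measure_zero volume), Real.volume_Icc]
    norm_num
  obtain ⟨K, hKs, hKc, hKμ⟩ := hsm.exists_isCompact_lt_add (by rw [hμs]; exact ENNReal.one_ne_top)
    (ε := 1/2) (by norm_num)
  have hKunc : ¬ K.Countable := by
    intro h
    rw [hμs, h.measure_zero volume, zero_add] at hKμ
    norm_num at hKμ
  obtain ⟨D, hD, hDne, hDK⟩ :=
    exists_perfect_nonempty_of_isClosed_of_not_countable hKc.isClosed hKunc
  have hDs : D ⊆ s := hDK.trans hKs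
  have hcont : ∀ x ∈ D, ContinuousAt f x := by
    intro x hx
    have := (hDs hx).2
    simpa using this
  have hDcomp : IsCompact D := hKc.of_isClosed_subset hD.closed hDK
  refine ⟨f '' D, ⟨?_, ?_⟩, hDne.image f, (image_subset_range f D)⟩
  · exact (hDcomp.image_of_continuousOn
      (fun x hx => (hcont x hx).continuousWithinAt)).isClosed
  · rintro - ⟨x, hxD, rfl⟩
    have hacc : AccPt x (𝓟 D) := hD.acc x hxD
    have := hacc.map (hcont x hxD) hf.injective
    rwa [Filter.map_principal] at this


/- `Perfect P` means `P` is closed with no isolated points.  A Bernstein set is a set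
`A ⊆ ℝ` such that both `A` and `ℝ \ A` meet every nonempty perfect subset of `ℝ`. -/
theorem stmt_19 :
    (∀ S : Set ℝ, Embeds ℝ ↥S ∨ Embeds ℝ ↥(Sᶜ)) ↔
      ¬ ∃ A : Set ℝ, ∀ P : Set ℝ, Perfect P → P.Nonempty →
        (A ∩ P).Nonempty ∧ (Aᶜ ∩ P).Nonempty := by
  constructor
  · rintro h ⟨A, hA⟩
    rcases h A with ⟨f, hf⟩ | ⟨f, hf⟩
    · have hg : StrictMono (fun x => (f x : ℝ)) := fun a b h' => hf h'
      obtain ⟨P, hP, hPne, hPsub⟩ := perfect_subset_of_strictMono hg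
      obtain ⟨z, hz1, hz2⟩ := (hA P hP hPne).2
      obtain ⟨x, hx⟩ := hPsub hz2
      apply hz1
      rw [← hx]
      exact (f x).2
    · have hg : StrictMono (fun x => (f x : ℝ)) := fun a b h' => hf h'
      obtain ⟨P, hP, hPne, hPsub⟩ := perfect_subset_of_strictMono hg
      obtain ⟨z, hz1, hz2⟩ := (hA P hP hPne).1
      obtain ⟨x, hx⟩ := hPsub hz2
      have : z ∈ Aᶜ := by rw [← hx]; exact (f x).2
      exact this hz1
  · intro h S
    have h' := not_exists.mp h S
    push_neg at h'
    obtain ⟨P, hP, hPne, hbad⟩ := h'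
    by_cases hSP : (S ∩ P).Nonempty
    · have hbad' := hbad hSP
      have hsub : P ⊆ S := fun z hz => by
        by_contra hzS
        have : z ∈ Sᶜ ∩ P := ⟨hzS, hz⟩
        rw [hbad'] at this; exact this
      obtain ⟨f, hfs, hfr⟩ := exists_strictMono_range_subset hP hPne
      exact Or.inl ⟨fun x => ⟨f x, hsub (hfr (mem_range_self x))⟩,
        fun a b hab => Subtype.mk_lt_mk.mpr (hfs hab)⟩
    · rw [Set.not_nonempty_iff_eq_empty] at hSP
      have hsub : P ⊆ Sᶜ := fun z hz => fun hzS => by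
        have : z ∈ S ∩ P := ⟨hzS, hz⟩
        rw [hSP] at this; exact this
      obtain ⟨f, hfs, hfr⟩ := exists_strictMono_range_subset hP hPne
      exact Or.inr ⟨fun x => ⟨f x, hsub (hfr (mem_range_self x))⟩,
        fun a b hab => Subtype.mk_lt_mk.mpr (hfs hab)⟩
end
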